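/- arXiv:1711.04149 — 8 statements merged into one kernel-verified Lean document; each statement's English description precedes it below -/
import Mathlib

section
/- There exists a natural number N such that for all natural numbers n ≥ N the following holds. Let φ be a real number with 1 ≤ φ < log n / log log n, let k = 24·⌈n^{1/φ}⌉ + 1, and let m be an integer with 1 ≤ m ≤ (12/φ)·n^{1/φ}·ln n. If m balls are thrown independently and uniformly at random into k bins, then with probability at least 1 − 1/(2·n^{1/φ}) some bin contains exactly one ball. (Lemma 1 of the paper: in the radio-network interpretation, a station receives the message exactly when some time slot of Balls-into-Bins(k) is chosen by exactly one of its m transmitting neighbors.) -/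
/-!
Call a map from balls to bins bad if no bin receives exactly one ball (`NoSingletonFiber`); the
failure probability is the number of bad maps divided by `k ^ m`. Write
`p = n ^ (1 / φ) = exp u` with `u = ln n / φ`; the bound on `φ` says `p > log₂ n`, and
`24 p < k ≤ 49 p`.

If `m ≤ 6 ln n`, every occupied bin of a bad map holds at least two balls, so a bad map takes
values in some set of `⌊m / 2⌋` bins; there are at most `C(k, ⌊m/2⌋) ⌊m/2⌋ ^ m` such maps,
which is tiny since `⌊m / 2⌋` is much smaller than `k`.

If `m > 6 ln n`, bad maps have exponential generating function `(exp x - x) ^ k`, so there are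
at most `(exp x - x) ^ k m! / x ^ m` of them for every `x > 0`. Taking `x = m / k`, the estimate
`exp x - x ≤ exp (x - x exp (-x))` and Stirling's bound on `m!` bound the failure probability
by `e √m exp (-m exp (-m / k))`, which is below `1 / (2 p)` because `m ≤ 12 u p`.
-/

open Finset MeasureTheory ProbabilityTheory Real

section NoSingleton

open scoped Nat

variable {α : Type*} [Fintype α]

def NoSingletonFiber {β : Type*} (f : α → β) : Prop := ∀ b, ¬ ∃! a, f a = b

open Classical in
noncomputable def noSingletonFiberMaps (α : Type*) [Fintype α] (k : ℕ) : Finset (α → Fin k) :=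
  {f | NoSingletonFiber f}

theorem mem_noSingletonFiberMaps {k : ℕ} {f : α → Fin k} :
    f ∈ noSingletonFiberMaps α k ↔ NoSingletonFiber f := by
  simp [noSingletonFiberMaps]

theorem NoSingletonFiber.two_mul_card_image_le {β : Type*} [DecidableEq β] {f : α → β}
    (hf : NoSingletonFiber f) : 2 * #(univ.image f) ≤ Fintype.card α := by
  classical
  have hfiber : ∀ b ∈ univ.image f, 2 ≤ #{a | f a = b} := by
    intro b hb
    obtain ⟨a, -, rfl⟩ := mem_image.1 hb
    have hne : #{a' | f a' = f a} ≠ 1 := fun h => hf _ ((Fintype.existsUnique_iff_card_one _).2 h)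
    have hpos : 0 < #{a' | f a' = f a} := card_pos.2 ⟨a, by simp⟩
    omega
  calc 2 * #(univ.image f) = ∑ _b ∈ univ.image f, 2 := by rw [sum_const, smul_eq_mul, mul_comm]
    _ ≤ ∑ b ∈ univ.image f, #{a | f a = b} := sum_le_sum hfiber
    _ = Fintype.card α := (card_eq_sum_card_image f univ).symm

theorem card_noSingletonFiberMaps_le_choose_mul_pow {k : ℕ} (hk : Fintype.card α / 2 ≤ k) :
    #(noSingletonFiberMaps α k) ≤
      k.choose (Fintype.card α / 2) * (Fintype.card α / 2) ^ Fintype.card α := by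
  classical
  set t := Fintype.card α / 2
  have hcover : noSingletonFiberMaps α k ⊆
      (powersetCard t (univ : Finset (Fin k))).biUnion fun T => Fintype.piFinset fun _ => T := by
    intro f hf
    have himage : #(univ.image f) ≤ t := by
      have := (mem_noSingletonFiberMaps.1 hf).two_mul_card_image_le
      omega
    obtain ⟨T, hfT, -, hT⟩ := exists_subsuperset_card_eq (subset_univ (univ.image f)) himage
      (by simpa using hk)
    exact mem_biUnion.2 ⟨T, mem_powersetCard.2 ⟨subset_univ T, hT⟩,
      Fintype.mem_piFinset.2 fun a => hfT (mem_image_of_mem f (mem_univ a))⟩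
  calc #(noSingletonFiberMaps α k) ≤ _ := card_le_card hcover
    _ ≤ ∑ T ∈ powersetCard t (univ : Finset (Fin k)), #(Fintype.piFinset fun _ : α => T) :=
      card_biUnion_le
    _ = k.choose t * t ^ Fintype.card α := by
      rw [sum_congr rfl fun T hT => by
        rw [Fintype.card_piFinset, prod_const, (mem_powersetCard.1 hT).2, card_univ]]
      simp

theorem card_noSingletonFiberMaps_filter_preimage_last_le [DecidableEq α] {k : ℕ} (S : Finset α) :
    #{f ∈ noSingletonFiberMaps α (k + 1) | univ.filter (f · = Fin.last k) = S} ≤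
      #(noSingletonFiberMaps (↥Sᶜ) k) := by
  refine card_le_card_of_surjOn
    (fun g a => if h : a ∈ S then Fin.last k else (g ⟨a, mem_compl.2 h⟩).castSucc) ?_
  intro f hf
  simp only [coe_filter, Set.mem_ofPred_eq, mem_noSingletonFiberMaps] at hf
  obtain ⟨hf, rfl⟩ := hf
  have hlast : ∀ a : ↥(univ.filter (f · = Fin.last k))ᶜ, f a ≠ Fin.last k := fun a h =>
    mem_compl.1 a.2 (by simpa using h)
  refine ⟨fun a => (f a).castPred (hlast a), ?_, ?_⟩
  · rw [mem_coe, mem_noSingletonFiberMaps]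
    rintro j ⟨a₀, ha₀, huniq⟩
    refine hf j.castSucc ⟨a₀, (Fin.castPred_eq_iff_eq_castSucc _ _ _).1 ha₀, fun a ha => ?_⟩
    have ha' : a ∈ (univ.filter (f · = Fin.last k))ᶜ := by
      simp [ha, Fin.castSucc_ne_last]
    exact congrArg Subtype.val (huniq ⟨a, ha'⟩ (by simp [ha]))
  · funext a
    by_cases ha : f a = Fin.last k <;> simp [ha]

theorem card_noSingletonFiberMaps_succ_le [DecidableEq α] (k : ℕ) :
    #(noSingletonFiberMaps α (k + 1)) ≤
      ∑ S ∈ univ.filter (fun S : Finset α => #S ≠ 1), #(noSingletonFiberMaps (↥Sᶜ) k) := by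
  rw [card_eq_sum_card_fiberwise (f := fun f => univ.filter (f · = Fin.last k))]
  · exact sum_le_sum fun S _ => card_noSingletonFiberMaps_filter_preimage_last_le S
  · intro f hf
    simp only [coe_filter, mem_univ, true_and, Set.mem_ofPred_eq]
    exact fun h => mem_noSingletonFiberMaps.1 hf _ ((Fintype.existsUnique_iff_card_one _).2 h)

end NoSingleton

section Bounds

open scoped Nat

theorem sum_range_erase_one_pow_div_factorial_le {x : ℝ} (hx : 0 ≤ x) (n : ℕ) :
    ∑ s ∈ (range n).erase 1, x ^ s / s ! ≤ exp x - x := by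
  calc ∑ s ∈ (range n).erase 1, x ^ s / s ! ≤ ∑ s ∈ (range (n + 2)).erase 1, x ^ s / s ! :=
        sum_le_sum_of_subset_of_nonneg (erase_subset_erase _ (range_subset_range.2 (by omega)))
          fun _ _ _ => by positivity
    _ = (∑ s ∈ range (n + 2), x ^ s / s !) - x := by
        rw [sum_erase_eq_sub (by simp)]; simp
    _ ≤ exp x - x := by gcongr; exact sum_le_exp_of_nonneg hx _

theorem sum_filter_card_ne_one_factorial_mul_pow (α : Type*) [Fintype α] (x : ℝ) :
    ∑ S ∈ univ.filter (fun S : Finset α => #S ≠ 1), ((Fintype.card α - #S)! : ℝ) * x ^ #S =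
      (Fintype.card α)! * ∑ s ∈ (range (Fintype.card α + 1)).erase 1, x ^ s / s ! := by
  classical
  set n := Fintype.card α
  rw [sum_filter, ← powerset_univ,
    sum_powerset_apply_card fun s => if s ≠ 1 then ((n - s)! : ℝ) * x ^ s else 0, card_univ,
    ← filter_ne', sum_filter, mul_sum]
  refine sum_congr rfl fun s hs => ?_
  split_ifs
  · rw [nsmul_eq_mul, Nat.cast_choose ℝ (Nat.lt_succ_iff.1 (mem_range.1 hs))]
    field_simp
  · simp

theorem card_noSingletonFiberMaps_mul_pow_le {x : ℝ} (hx : 0 ≤ x) (k : ℕ) (α : Type*)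
    [Fintype α] :
    #(noSingletonFiberMaps α k) * x ^ Fintype.card α ≤ (exp x - x) ^ k * (Fintype.card α)! := by
  classical
  have hexp : 0 ≤ exp x - x := by linarith [add_one_le_exp x]
  induction k generalizing α with
  | zero =>
    calc (#(noSingletonFiberMaps α 0) : ℝ) * x ^ Fintype.card α
        ≤ (0 : ℝ) ^ Fintype.card α * x ^ Fintype.card α := by
          gcongr
          exact_mod_cast (card_le_univ _).trans (by simp)
      _ ≤ (exp x - x) ^ 0 * (Fintype.card α)! := by
          rw [← mul_pow, zero_mul, pow_zero, one_mul]
          exact (pow_le_one₀ le_rfl zero_le_one).trans (mod_cast Nat.factorial_pos _)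
  | succ k ih =>
    set n := Fintype.card α
    have hS : ∀ S : Finset α, x ^ n = x ^ Fintype.card ↥Sᶜ * x ^ #S := fun S => by
      rw [← pow_add, Fintype.card_coe, card_compl, Nat.sub_add_cancel (card_le_univ S)]
    calc (#(noSingletonFiberMaps α (k + 1)) : ℝ) * x ^ n
        ≤ ∑ S ∈ univ.filter (fun S : Finset α => #S ≠ 1),
            #(noSingletonFiberMaps (↥Sᶜ) k) * x ^ Fintype.card ↥Sᶜ * x ^ #S := by
          simp_rw [mul_assoc, ← hS, ← sum_mul]
          gcongr
          exact_mod_cast card_noSingletonFiberMaps_succ_le k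
      _ ≤ ∑ S ∈ univ.filter (fun S : Finset α => #S ≠ 1),
            (exp x - x) ^ k * (n - #S)! * x ^ #S := by
          refine sum_le_sum fun S _ => mul_le_mul_of_nonneg_right ?_ (by positivity)
          simpa only [Fintype.card_coe, card_compl, card_univ] using ih ↥Sᶜ
      _ = (exp x - x) ^ k * n ! * ∑ s ∈ (range (n + 1)).erase 1, x ^ s / s ! := by
          simp_rw [mul_assoc]
          rw [← mul_sum, sum_filter_card_ne_one_factorial_mul_pow]
      _ ≤ (exp x - x) ^ (k + 1) * n ! := by
          rw [pow_succ, mul_right_comm]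
          gcongr
          exact sum_range_erase_one_pow_div_factorial_le hx _

theorem factorial_le_exp_one_mul_sqrt_mul_pow {n : ℕ} (hn : n ≠ 0) :
    (n ! : ℝ) ≤ exp 1 * √n * (n / exp 1) ^ n := by
  have hanti : Stirling.stirlingSeq n ≤ Stirling.stirlingSeq 1 := by
    obtain ⟨n, rfl⟩ := Nat.exists_eq_succ_of_ne_zero hn
    exact Stirling.stirlingSeq'_antitone (Nat.zero_le n)
  have hpos : 0 < √(2 * n : ℝ) * (n / exp 1) ^ n := by
    have : (0 : ℝ) < n := by positivity
    positivity
  rw [Stirling.stirlingSeq_one, Stirling.stirlingSeq, div_le_iff₀ hpos] at hanti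
  calc (n ! : ℝ) ≤ exp 1 / √2 * (√(2 * n : ℝ) * (n / exp 1) ^ n) := hanti
    _ = exp 1 * √n * (n / exp 1) ^ n := by
      rw [sqrt_mul zero_le_two]; field_simp

theorem exp_sub_self_le_exp (x : ℝ) : exp x - x ≤ exp (x - x * exp (-x)) := by
  calc exp x - x = exp x * (1 - x * exp (-x)) := by
        rw [mul_sub, mul_one, ← mul_assoc, mul_comm (exp x), mul_assoc, ← exp_add]; simp
    _ ≤ exp x * exp (-(x * exp (-x))) := by
        gcongr; linarith [add_one_le_exp (-(x * exp (-x)))]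
    _ = exp (x - x * exp (-x)) := by rw [← exp_add, sub_eq_add_neg]

theorem card_noSingletonFiberMaps_le_exp {m k : ℕ} (hm : m ≠ 0) (hk : k ≠ 0) :
    (#(noSingletonFiberMaps (Fin m) k) : ℝ) ≤
      k ^ m * (exp 1 * √m * exp (-(m * exp (-(m / k))))) := by
  set x : ℝ := m / k
  have hx : 0 < x := by positivity
  have hkx : k * x = m := mul_div_cancel₀ _ (by positivity)
  have hegf := card_noSingletonFiberMaps_mul_pow_le hx.le k (Fin m)
  rw [Fintype.card_fin] at hegf
  have hpow : (exp x - x) ^ k ≤ exp (m - m * exp (-x)) := by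
    calc (exp x - x) ^ k ≤ exp (x - x * exp (-x)) ^ k :=
          pow_le_pow_left₀ (by linarith [add_one_le_exp x]) (exp_sub_self_le_exp x) k
      _ = exp (m - m * exp (-x)) := by rw [← exp_nat_mul, ← hkx]; ring_nf
  refine le_of_mul_le_mul_right ?_ (pow_pos hx m)
  calc (#(noSingletonFiberMaps (Fin m) k) : ℝ) * x ^ m ≤ (exp x - x) ^ k * m ! := hegf
    _ ≤ exp (m - m * exp (-x)) * (exp 1 * √m * (m / exp 1) ^ m) := by
        gcongr
        exact factorial_le_exp_one_mul_sqrt_mul_pow hm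
    _ = k ^ m * (exp 1 * √m * exp (-(m * exp (-x)))) * x ^ m := by
        rw [div_pow, ← exp_nat_mul, mul_one, div_pow, sub_eq_add_neg, exp_add]
        field_simp

theorem exp_one_mul_sqrt_mul_exp_neg_le {u L M K : ℝ} (hu : 0 < u) (huL : u ≤ L) (hL : 50 ≤ L)
    (hK : 24 * exp u < K) (hK' : K ≤ 49 * exp u) (hM : 6 * L ≤ M) (hM' : M ≤ 12 * u * exp u) :
    exp 1 * √M * exp (-(M * exp (-(M / K)))) ≤ 1 / (2 * exp u) := by
  have hKpos : 0 < K := lt_of_le_of_lt (by positivity) hK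
  have hMpos : 0 < M := by linarith
  have hlog2 : log 2 < 1 := by linarith [log_two_lt_d9]
  -- If `M ≤ K` then `M exp (-M / K) ≥ M / e ≥ 2 L`; otherwise `M / K ≤ u / 2` and
  -- `M exp (-M / K) ≥ K exp (-u / 2) ≥ 24 exp (u / 2)`.
  have hexponent : log 2 + u + 1 + log M / 2 ≤ M * exp (-(M / K)) := by
    rcases le_or_gt M K with hMK | hKM
    · have hexp : (0.36 : ℝ) ≤ exp (-(M / K)) := by
        calc (0.36 : ℝ) ≤ exp (-1) := by
              rw [exp_neg]
              exact le_inv_of_le_inv₀ (exp_pos 1) (by norm_num; linarith [exp_one_lt_d9])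
          _ ≤ exp (-(M / K)) := exp_le_exp.2 (by rw [neg_le_neg_iff, div_le_one hKpos]; exact hMK)
      have hlogM : log M ≤ 48 + u := by
        calc log M ≤ log (49 * exp u) := log_le_log hMpos (hMK.trans hK')
          _ = log 49 + u := by rw [log_mul (by norm_num) (exp_pos u).ne', log_exp]
          _ ≤ 48 + u := by linarith [log_le_sub_one_of_pos (show (0 : ℝ) < 49 by norm_num)]
      nlinarith
    · have hexp : exp (-(u / 2)) ≤ exp (-(M / K)) := by
        refine exp_le_exp.2 (neg_le_neg ((div_le_iff₀ hKpos).2 ?_))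
        nlinarith [exp_pos u]
      have hKexp : 24 * exp (u / 2) ≤ K * exp (-(u / 2)) := by
        calc 24 * exp (u / 2) = 24 * exp u * exp (-(u / 2)) := by
              rw [mul_assoc, ← exp_add]; ring_nf
          _ ≤ K * exp (-(u / 2)) := by gcongr
      have hlogM : log M ≤ 11 + u + u := by
        calc log M ≤ log (12 * u * exp u) := log_le_log hMpos hM'
          _ = log 12 + log u + u := by
              rw [log_mul (by positivity) (exp_pos u).ne', log_mul (by norm_num) hu.ne', log_exp]
          _ ≤ 11 + u + u := by
              linarith [log_le_sub_one_of_pos (show (0 : ℝ) < 12 by norm_num),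
                log_le_sub_one_of_pos hu]
      nlinarith [add_one_le_exp (u / 2), exp_pos (-(M / K)), exp_pos (-(u / 2))]
  rw [le_div_iff₀ (by positivity)]
  calc exp 1 * √M * exp (-(M * exp (-(M / K)))) * (2 * exp u)
      = exp (log 2 + u + 1 + log M / 2) * exp (-(M * exp (-(M / K)))) := by
        rw [exp_add, exp_add, exp_add, exp_log two_pos, sqrt_eq_rpow, rpow_def_of_pos hMpos]
        ring_nf
    _ ≤ exp (M * exp (-(M / K))) * exp (-(M * exp (-(M / K)))) := by gcongr
    _ = 1 := by rw [← exp_add, add_neg_cancel, exp_zero]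

theorem choose_mul_pow_le_pow_mul_exp_one_mul_pow {k t m : ℕ} (ht : 2 * t ≤ m) :
    (k.choose t : ℝ) * t ^ m ≤ k ^ t * (exp 1 * t) ^ (m - t) := by
  have hchoose : (k.choose t : ℝ) ≤ k ^ t / t ! := Nat.choose_le_pow_div t k
  have hpow : (t : ℝ) ^ t ≤ t ! * exp 1 ^ t := by
    rw [exp_one_pow, ← div_le_iff₀' (by positivity)]
    exact pow_div_factorial_le_exp _ (Nat.cast_nonneg t) t
  have hexp : exp 1 ^ t ≤ exp 1 ^ (m - t) :=
    pow_le_pow_right₀ (one_le_exp zero_le_one) (by omega)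
  calc (k.choose t : ℝ) * t ^ m = k.choose t * t ^ t * t ^ (m - t) := by
        rw [mul_assoc, ← pow_add, Nat.add_sub_cancel' (by omega)]
    _ ≤ k ^ t / t ! * (t ! * exp 1 ^ t) * t ^ (m - t) := by gcongr
    _ = k ^ t * exp 1 ^ t * t ^ (m - t) := by field_simp
    _ ≤ k ^ t * (exp 1 * t) ^ (m - t) := by rw [mul_pow, ← mul_assoc]; gcongr

theorem two_mul_mul_exp_one_mul_pow_le {t s : ℕ} {p K : ℝ} (ht : t ≤ s + 1) (hp : 0 ≤ p)
    (hK : 24 * p ≤ K) (htK : exp 1 * t ≤ K / 4) :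
    2 * p * (exp 1 * t) ^ (s + 1) ≤ K ^ (s + 1) := by
  have hK0 : 0 ≤ K := by linarith
  have hsmall : exp 1 * t ≤ 12 * 4 ^ s := by
    have htpow : (t : ℝ) ≤ 4 ^ (s + 1) := by
      exact_mod_cast (Nat.lt_pow_self (by norm_num)).le.trans
        (Nat.pow_le_pow_right (by norm_num) ht)
    calc exp 1 * t ≤ 3 * 4 ^ (s + 1) := by
          gcongr; linarith [exp_one_lt_d9]
      _ = 12 * 4 ^ s := by ring
  calc 2 * p * (exp 1 * t) ^ (s + 1) = 2 * p * ((exp 1 * t) ^ s * (exp 1 * t)) := by ring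
    _ ≤ 2 * p * ((K / 4) ^ s * (12 * 4 ^ s)) := by gcongr
    _ = 24 * p * K ^ s := by rw [div_pow]; field_simp; ring
    _ ≤ K ^ (s + 1) := by rw [pow_succ']; gcongr

theorem card_noSingletonFiberMaps_le_of_few_balls {m k : ℕ} {p : ℝ} (hm : m ≠ 0) (hp : 0 < p)
    (hk : 24 * p ≤ k) (hmk : exp 1 * (m / 2 : ℕ) ≤ k / 4) :
    (#(noSingletonFiberMaps (Fin m) k) : ℝ) ≤ k ^ m / (2 * p) := by
  set t := m / 2
  have htk : t ≤ k := by
    have : (t : ℝ) ≤ k := by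
      nlinarith [one_le_exp (zero_le_one (α := ℝ)), (Nat.cast_nonneg t : (0 : ℝ) ≤ t)]
    exact_mod_cast this
  obtain ⟨s, hs⟩ : ∃ s, m - t = s + 1 := ⟨m - t - 1, by omega⟩
  have hcount : (#(noSingletonFiberMaps (Fin m) k) : ℝ) ≤ k.choose t * t ^ m := by
    have := card_noSingletonFiberMaps_le_choose_mul_pow (α := Fin m) (k := k)
      (by simpa using htk)
    simp only [Fintype.card_fin] at this
    exact_mod_cast this
  rw [le_div_iff₀ (by positivity)]
  calc (#(noSingletonFiberMaps (Fin m) k) : ℝ) * (2 * p)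
      ≤ k ^ t * (exp 1 * t) ^ (s + 1) * (2 * p) := by
        gcongr
        rw [← hs]
        exact hcount.trans (choose_mul_pow_le_pow_mul_exp_one_mul_pow (by omega))
    _ = k ^ t * (2 * p * (exp 1 * t) ^ (s + 1)) := by ring
    _ ≤ k ^ t * k ^ (s + 1) := by
        gcongr
        exact two_mul_mul_exp_one_mul_pow_le (by omega) hp.le hk hmk
    _ = k ^ m := by rw [← pow_add, ← hs]; congr 1; omega

theorem card_noSingletonFiberMaps_le_div_exp {m k : ℕ} {u L : ℝ} (hm : m ≠ 0) (hu : 0 < u)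
    (huL : u ≤ L) (hL : 50 ≤ L) (hLu : L < exp u * log 2) (hk : 24 * exp u < k)
    (hk' : k ≤ 49 * exp u) (hmu : m ≤ 12 * u * exp u) :
    (#(noSingletonFiberMaps (Fin m) k) : ℝ) ≤ k ^ m / (2 * exp u) := by
  rcases le_or_gt (m : ℝ) (6 * L) with hfew | hmany
  · refine card_noSingletonFiberMaps_le_of_few_balls hm (exp_pos u) hk.le ?_
    have ht : ((m / 2 : ℕ) : ℝ) ≤ 3 * L := by
      have : ((2 * (m / 2) : ℕ) : ℝ) ≤ m := by exact_mod_cast Nat.mul_div_le m 2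
      push_cast at this
      linarith
    have hLk : 24 * L < k * 0.6931471808 := by
      nlinarith [log_two_lt_d9, log_two_gt_d9, exp_pos u]
    nlinarith [exp_one_lt_d9, exp_pos 1, (Nat.cast_nonneg _ : (0 : ℝ) ≤ ((m / 2 : ℕ) : ℝ))]
  · have hk0 : k ≠ 0 := by rintro rfl; simp only [Nat.cast_zero] at hk; linarith [exp_pos u]
    calc (#(noSingletonFiberMaps (Fin m) k) : ℝ)
        ≤ k ^ m * (exp 1 * √m * exp (-(m * exp (-(m / k))))) :=
          card_noSingletonFiberMaps_le_exp hm hk0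
      _ ≤ k ^ m * (1 / (2 * exp u)) := by
          gcongr
          exact exp_one_mul_sqrt_mul_exp_neg_le hu huL hL hk hk' (by linarith) hmu
      _ = k ^ m / (2 * exp u) := mul_one_div _ _

end Bounds

theorem ProbabilityTheory.iIndepFun.measure_mem_finset {Ω ι β : Type*} [MeasurableSpace Ω]
    [Fintype ι] [MeasurableSpace β] [MeasurableSingletonClass β] {μ : Measure Ω}
    {X : ι → Ω → β} (hX : ∀ i, Measurable (X i)) (hindep : iIndepFun X μ) {c : ENNReal}
    (hc : ∀ i b, μ {ω | X i ω = b} = c) (E : Finset (ι → β)) :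
    μ {ω | (fun i => X i ω) ∈ E} = #E * c ^ Fintype.card ι := by
  have hpoint : ∀ f : ι → β, μ ((fun ω i => X i ω) ⁻¹' {f}) = c ^ Fintype.card ι := fun f => by
    have hset : (fun ω i => X i ω) ⁻¹' {f} = ⋂ i, X i ⁻¹' {f i} := by
      ext ω; simp [funext_iff]
    rw [hset, hindep.meas_iInter fun i => ⟨{f i}, measurableSet_singleton _, rfl⟩]
    simp [Set.preimage, hc]
  change μ ((fun ω i => X i ω) ⁻¹' E) = _
  rw [← sum_measure_preimage_singleton]
  · simp [hpoint]
  · exact fun f _ => measurable_pi_lambda _ hX (measurableSet_singleton f)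

theorem one_sub_le_measure_exists_existsUnique {Ω : Type*} [MeasurableSpace Ω] {μ : Measure Ω}
    [IsProbabilityMeasure μ] {m k : ℕ} (hk : k ≠ 0) {X : Fin m → Ω → Fin k}
    (hX : ∀ i, Measurable (X i)) (hindep : iIndepFun X μ)
    (hunif : ∀ i j, μ {ω | X i ω = j} = (k : ENNReal)⁻¹) {q : ℝ}
    (hq : (#(noSingletonFiberMaps (Fin m) k) : ℝ) ≤ k ^ m * q) :
    1 - ENNReal.ofReal q ≤ μ {ω | ∃ j : Fin k, ∃! i : Fin m, X i ω = j} := by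
  have hset : {ω | ∃ j : Fin k, ∃! i : Fin m, X i ω = j} =
      {ω | (fun i => X i ω) ∈ noSingletonFiberMaps (Fin m) k}ᶜ := by
    ext ω; simp [mem_noSingletonFiberMaps, NoSingletonFiber]
  have hmeas : MeasurableSet {ω | (fun i => X i ω) ∈ noSingletonFiberMaps (Fin m) k} :=
    measurable_pi_lambda _ hX (Finset.measurableSet _)
  rw [hset, prob_compl_eq_one_sub hmeas, hindep.measure_mem_finset hX hunif, Fintype.card_fin]
  gcongr
  have hk0 : (0 : ℝ) < k := Nat.cast_pos.2 (Nat.pos_of_ne_zero hk)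
  rw [← ENNReal.ofReal_natCast, ← ENNReal.ofReal_natCast k, ← ENNReal.ofReal_inv_of_pos hk0,
    ← ENNReal.ofReal_pow (inv_nonneg.2 hk0.le), ← ENNReal.ofReal_mul (Nat.cast_nonneg _)]
  refine ENNReal.ofReal_le_ofReal ?_
  rwa [inv_pow, ← div_eq_mul_inv, div_le_iff₀' (by positivity)]

theorem logb_two_lt_rpow_one_div {x a : ℝ} (hx : 2 < x) (ha : 0 < a)
    (h : a < logb 2 x / logb 2 (logb 2 x)) : logb 2 x < x ^ (1 / a) := by
  have hlogb : 1 < logb 2 x := by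
    rw [Real.lt_logb_iff_rpow_lt one_lt_two (by linarith)]; simpa using hx
  have hloglog : 0 < logb 2 (logb 2 x) := logb_pos one_lt_two hlogb
  rw [← logb_lt_logb_iff one_lt_two (by linarith) (by positivity),
    logb_rpow_eq_mul_logb_of_pos (by linarith), one_div_mul_eq_div, lt_div_iff₀ ha, mul_comm]
  exact (lt_div_iff₀ hloglog).1 h

theorem card_noSingletonFiberMaps_le_div_rpow {n : ℕ} {φ : ℝ} (hn : exp 50 ≤ n) (hφ : 1 ≤ φ)
    (hφn : φ < logb 2 n / logb 2 (logb 2 n)) {k m : ℕ} (hk : k = 24 * ⌈(n : ℝ) ^ (1 / φ)⌉₊ + 1)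
    (hm : m ≠ 0) (hmn : (m : ℝ) ≤ 12 / φ * (n : ℝ) ^ (1 / φ) * log n) :
    (#(noSingletonFiberMaps (Fin m) k) : ℝ) ≤ k ^ m / (2 * (n : ℝ) ^ (1 / φ)) := by
  have hn2 : (2 : ℝ) < n := lt_of_lt_of_le (by linarith [add_one_le_exp 50]) hn
  have hL : 50 ≤ log n := (le_log_iff_exp_le (by linarith)).2 hn
  have hlogb := logb_two_lt_rpow_one_div hn2 (by linarith) hφn
  have hp : (n : ℝ) ^ (1 / φ) = exp (log n / φ) := by
    rw [rpow_def_of_pos (by linarith), mul_one_div]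
  rw [hp] at hlogb hmn hk ⊢
  have hu1 : 1 ≤ exp (log n / φ) := one_le_exp (by positivity)
  have hceil := Nat.le_ceil (exp (log n / φ))
  have hceil' := Nat.ceil_lt_add_one (zero_le_one.trans hu1)
  have hkR : (k : ℝ) = 24 * ⌈exp (log n / φ)⌉₊ + 1 := by rw [hk]; push_cast; ring
  refine card_noSingletonFiberMaps_le_div_exp hm (by positivity) (div_le_self (by linarith) hφ)
    hL ?_ (by linarith) (by linarith) ?_
  · rwa [logb, div_lt_iff₀ (log_pos one_lt_two)] at hlogb
  · calc (m : ℝ) ≤ 12 / φ * exp (log n / φ) * log n := hmn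
      _ = 12 * (log n / φ) * exp (log n / φ) := by ring

/-- Lemma 1 of the paper: there is `N` such that for all
`n ≥ N`, all real `1 ≤ φ < log n / log log n` (logs base 2), with
`k = 24·⌈n^(1/φ)⌉ + 1`, and any `1 ≤ m ≤ (12/φ)·n^(1/φ)·ln n`, if `m` balls
are thrown independently and uniformly at random into `k` bins, then with
probability at least `1 − 1/(2·n^(1/φ))` some bin contains exactly one
ball. -/
theorem balls_into_bins_success :
    ∃ N : ℕ, ∀ n : ℕ, N ≤ n → ∀ φ : ℝ, 1 ≤ φ →
      φ < Real.logb 2 n / Real.logb 2 (Real.logb 2 n) →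
      ∀ k : ℕ, k = 24 * ⌈(n : ℝ) ^ (1 / φ)⌉₊ + 1 →
      ∀ m : ℕ, 1 ≤ m → (m : ℝ) ≤ 12 / φ * (n : ℝ) ^ (1 / φ) * Real.log n →
      ∀ (Ω : Type) (_ : MeasurableSpace Ω) (μ : Measure Ω),
        IsProbabilityMeasure μ →
      ∀ X : Fin m → Ω → Fin k, (∀ i, Measurable (X i)) →
        iIndepFun X μ →
        (∀ (i : Fin m) (j : Fin k), μ {ω | X i ω = j} = (k : ENNReal)⁻¹) →
        1 - ENNReal.ofReal (1 / (2 * (n : ℝ) ^ (1 / φ))) ≤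
          μ {ω | ∃ j : Fin k, ∃! i : Fin m, X i ω = j} := by
  refine ⟨⌈exp 50⌉₊, fun n hn φ hφ hφn k hk m hm hmn Ω _ μ _ X hX hindep hunif => ?_⟩
  refine one_sub_le_measure_exists_existsUnique (by omega) hX hindep hunif ?_
  rw [mul_one_div]
  exact card_noSingletonFiberMaps_le_div_rpow (Nat.ceil_le.1 hn) hφ hφn hk (by omega) hmn
end

section
/- For all integers k ≥ 1 and m ≥ 2, if m balls are thrown independently and uniformly at random into k bins, then the probability that no bin contains exactly one ball is at most (m−1)(m−2)/k² + 1/k. (Small-m case in the proof of Lemma 1: either both of the last two balls land in bins already occupied by earlier balls, or the second-to-last ball lands in a fresh bin and the last ball collides with it.) -/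
open MeasureTheory ProbabilityTheory

/-!
Fix two balls `a ≠ b`. If no bin holds exactly one ball, then either `a` and `b` share a bin,
which has probability `1/k`, or some ball `i ∉ {a, b}` shares the bin of `a` and another ball
`j ∉ {a, b}` shares the bin of `b`. The pairs `(X i, X a)` and `(X j, X b)` are independent,
so each such event has probability at most `1/k²`, and a union bound over the at most `(m-2)²`
pairs `(i, j)` gives `1/k + (m-2)²/k² ≤ 1/k + (m-1)(m-2)/k²`.
-/

lemma exists_pair_eq_of_not_existsUnique {ι β : Type*} {x : ι → β} {a b : ι}
    (hne : x a ≠ x b) (ha : ¬∃! i, x i = x a) (hb : ¬∃! i, x i = x b) :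
    ∃ i j, i ≠ a ∧ i ≠ b ∧ j ≠ a ∧ j ≠ b ∧ i ≠ j ∧ x i = x a ∧ x j = x b := by
  obtain ⟨i, hi, hia⟩ : ∃ i, x i = x a ∧ i ≠ a := by
    by_contra! h
    exact ha ⟨a, rfl, h⟩
  obtain ⟨j, hj, hjb⟩ : ∃ j, x j = x b ∧ j ≠ b := by
    by_contra! h
    exact hb ⟨b, rfl, h⟩
  refine ⟨i, j, hia, ?_, ?_, hjb, ?_, hi, hj⟩
  · rintro rfl; exact hne hi.symm
  · rintro rfl; exact hne hj
  · rintro rfl; exact hne (hi.symm.trans hj)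

section

variable {Ω α ι : Type*} [MeasurableSpace Ω] {μ : Measure Ω}
  [Fintype α] [MeasurableSpace α] [MeasurableSingletonClass α]

lemma ProbabilityTheory.IndepFun.measureReal_setOf_eq_le_inv_card {X Y : Ω → α} (h : IndepFun X Y μ)
    (hX : ∀ c, μ.real (X ⁻¹' {c}) = (Fintype.card α : ℝ)⁻¹)
    (hY : ∀ c, μ.real (Y ⁻¹' {c}) = (Fintype.card α : ℝ)⁻¹) :
    μ.real {ω | X ω = Y ω} ≤ (Fintype.card α : ℝ)⁻¹ := by
  have hunion : {ω | X ω = Y ω} = ⋃ c, X ⁻¹' {c} ∩ Y ⁻¹' {c} := by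
    ext ω; simp [eq_comm]
  calc μ.real {ω | X ω = Y ω} ≤ ∑ c, μ.real (X ⁻¹' {c} ∩ Y ⁻¹' {c}) :=
        hunion ▸ measureReal_iUnion_fintype_le _
    _ = ∑ c : α, (Fintype.card α : ℝ)⁻¹ * (Fintype.card α : ℝ)⁻¹ := by
        refine Finset.sum_congr rfl fun c _ => ?_
        rw [measureReal_def, h.measure_inter_preimage_eq_mul _ _ (.singleton c) (.singleton c),
          ENNReal.toReal_mul, ← measureReal_def, ← measureReal_def, hX, hY]
    _ = (Fintype.card α : ℝ)⁻¹ := by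
        rw [Finset.sum_const, Finset.card_univ, nsmul_eq_mul, ← mul_assoc]
        rcases eq_or_ne (Fintype.card α : ℝ) 0 with h0 | h0
        · simp [h0]
        · rw [mul_inv_cancel₀ h0, one_mul]

lemma ProbabilityTheory.iIndepFun.measureReal_setOf_eq_and_eq_le
    {X : ι → Ω → α} (h : iIndepFun X μ) (hmeas : ∀ i, Measurable (X i))
    (hunif : ∀ i c, μ.real (X i ⁻¹' {c}) = (Fintype.card α : ℝ)⁻¹)
    {i a j b : ι} (hia : i ≠ a) (hij : i ≠ j) (hib : i ≠ b) (haj : a ≠ j) (hab : a ≠ b)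
    (hjb : j ≠ b) :
    μ.real {ω | X i ω = X a ω ∧ X j ω = X b ω} ≤ (Fintype.card α : ℝ)⁻¹ ^ 2 := by
  change μ.real ((fun ω => (X i ω, X a ω)) ⁻¹' {p | p.1 = p.2} ∩
    (fun ω => (X j ω, X b ω)) ⁻¹' {p | p.1 = p.2}) ≤ _
  rw [measureReal_def, (h.indepFun_prodMk_prodMk hmeas i a j b hij hib haj hab)
    |>.measure_inter_preimage_eq_mul _ _ .of_discrete .of_discrete, ENNReal.toReal_mul, sq]
  exact mul_le_mul ((h.indepFun hia).measureReal_setOf_eq_le_inv_card (hunif i) (hunif a))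
    ((h.indepFun hjb).measureReal_setOf_eq_le_inv_card (hunif j) (hunif b))
    measureReal_nonneg (by positivity)

open Finset in
lemma ProbabilityTheory.iIndepFun.measureReal_not_exists_existsUnique_le
    [IsFiniteMeasure μ] [Fintype ι]
    {X : ι → Ω → α} (h : iIndepFun X μ) (hmeas : ∀ i, Measurable (X i))
    (hunif : ∀ i c, μ.real (X i ⁻¹' {c}) = (Fintype.card α : ℝ)⁻¹) {a b : ι} (hab : a ≠ b) :
    μ.real {ω | ¬∃ c, ∃! i, X i ω = c} ≤
      (Fintype.card α : ℝ)⁻¹ + (Fintype.card ι - 2 : ℕ) ^ 2 * (Fintype.card α : ℝ)⁻¹ ^ 2 := by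
  classical
  set pairs := ({a, b}ᶜ ×ˢ {a, b}ᶜ : Finset (ι × ι)).filter fun p => p.1 ≠ p.2
  have hsub : {ω | ¬∃ c, ∃! i, X i ω = c} ⊆
      {ω | X a ω = X b ω} ∪ ⋃ p ∈ pairs, {ω | X p.1 ω = X a ω ∧ X p.2 ω = X b ω} := by
    intro ω hω
    by_cases hne : X a ω = X b ω
    · exact .inl hne
    obtain ⟨i, j, hia, hib, hja, hjb, hij, hi, hj⟩ := exists_pair_eq_of_not_existsUnique hne
      (fun h' => hω ⟨_, h'⟩) (fun h' => hω ⟨_, h'⟩)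
    refine .inr (Set.mem_biUnion (x := (i, j)) ?_ ⟨hi, hj⟩)
    simp [pairs, *]
  have hcard : #pairs ≤ (Fintype.card ι - 2) ^ 2 := by
    calc #pairs ≤ #({a, b}ᶜ ×ˢ {a, b}ᶜ : Finset (ι × ι)) := card_filter_le _ _
      _ = (Fintype.card ι - 2) ^ 2 := by rw [card_product, card_compl, card_pair hab, sq]
  calc μ.real {ω | ¬∃ c, ∃! i, X i ω = c}
      ≤ μ.real {ω | X a ω = X b ω} +
          ∑ p ∈ pairs, μ.real {ω | X p.1 ω = X a ω ∧ X p.2 ω = X b ω} :=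
        (measureReal_mono hsub).trans <|
          (measureReal_union_le _ _).trans (add_le_add_right (measureReal_biUnion_finset_le _ _) _)
    _ ≤ (Fintype.card α : ℝ)⁻¹ + ∑ _p ∈ pairs, (Fintype.card α : ℝ)⁻¹ ^ 2 := by
        gcongr with p hp
        · exact (h.indepFun hab).measureReal_setOf_eq_le_inv_card (hunif a) (hunif b)
        · simp only [pairs, mem_filter, mem_product, mem_compl, mem_insert, mem_singleton] at hp
          exact h.measureReal_setOf_eq_and_eq_le hmeas hunif (by tauto) hp.2 (by tauto) (by tauto)
            hab (by tauto)
    _ ≤ _ := by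
        rw [sum_const, nsmul_eq_mul]
        gcongr
        exact_mod_cast hcard

end

theorem no_singleton_bin_bound_general (k m : ℕ) (hm : 2 ≤ m)
    (Ω : Type*) [MeasurableSpace Ω] (μ : Measure Ω) [IsProbabilityMeasure μ]
    (X : Fin m → Ω → Fin k) (hmeas : ∀ i, Measurable (X i))
    (hind : iIndepFun X μ)
    (hunif : ∀ (i : Fin m) (j : Fin k), μ {ω | X i ω = j} = (k : ENNReal)⁻¹) :
    μ {ω | ¬ ∃ j : Fin k, ∃! i : Fin m, X i ω = j} ≤
      ENNReal.ofReal (((m : ℝ) - 1) * ((m : ℝ) - 2) / k ^ 2 + 1 / k) := by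
  have hunif_real : ∀ i c, μ.real (X i ⁻¹' {c}) = (Fintype.card (Fin k) : ℝ)⁻¹ := fun i c => by
    rw [measureReal_def, Fintype.card_fin, ← ENNReal.toReal_natCast, ← ENNReal.toReal_inv,
      ← hunif i c]
    rfl
  have hbound := hind.measureReal_not_exists_existsUnique_le hmeas hunif_real
    (a := ⟨0, by omega⟩) (b := ⟨1, by omega⟩) (by simp [Fin.ext_iff])
  rw [← ofReal_measureReal]
  refine ENNReal.ofReal_le_ofReal (hbound.trans ?_)
  rw [Fintype.card_fin, Fintype.card_fin, Nat.cast_sub hm, Nat.cast_ofNat, inv_pow,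
    ← div_eq_mul_inv, one_div, add_comm]
  have hm_real : (2 : ℝ) ≤ m := by exact_mod_cast hm
  gcongr
  nlinarith

/-- if `m ≥ 2` balls are thrown independently and uniformly at
random into `k ≥ 1` bins, the probability that no bin contains exactly one
ball is at most `(m−1)(m−2)/k² + 1/k`. -/
theorem no_singleton_bin_bound (k m : ℕ) (hk : 1 ≤ k) (hm : 2 ≤ m)
    (Ω : Type*) [MeasurableSpace Ω] (μ : Measure Ω) [IsProbabilityMeasure μ]
    (X : Fin m → Ω → Fin k) (hmeas : ∀ i, Measurable (X i))
    (hind : iIndepFun X μ)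
    (hunif : ∀ (i : Fin m) (j : Fin k), μ {ω | X i ω = j} = (k : ENNReal)⁻¹) :
    μ {ω | ¬ ∃ j : Fin k, ∃! i : Fin m, X i ω = j} ≤
      ENNReal.ofReal (((m : ℝ) - 1) * ((m : ℝ) - 2) / k ^ 2 + 1 / k) :=
  no_singleton_bin_bound_general k m hm Ω μ X hmeas hind hunif
end

section
/- There exists a natural number N such that for all natural numbers n ≥ N and all real φ with 1 ≤ φ < log n / log log n, setting m = 12·⌈n^{1/(2φ)}⌉ and k = 24·⌈n^{1/φ}⌉ + 1, one has exp(−(m/2)·exp(−(2m−2)/(k−1))) ≤ 1/(2·n^{1/φ}). (Lower-endpoint evaluation in the proof of Lemma 1.) -/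
/-!
Put `x = n^(1/(2φ))`, so that `x² = n^(1/φ)`, `m = 12⌈x⌉` and `k - 1 = 24⌈x²⌉`. The bound
`φ < log n / log log n` says exactly that `log n < n^(1/φ) = x²`, so `x > 3` once `n ≥ 2⁹`.
Then `(2m - 2)/(k - 1) ≤ (x + 1)/x² ≤ 1/2`, the inner exponential is at least `1/2`, and the
left-hand side is at most `exp(-3x) ≤ 1/(2x²)`.
-/

open Real

lemma logb_lt_rpow_inv_of_lt_div_logb_logb {n φ : ℝ} (hn : 0 < n) (hφ : 0 < φ)
    (hL : 1 < logb 2 n) (hφ_lt : φ < logb 2 n / logb 2 (logb 2 n)) :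
    logb 2 n < n ^ (1 / φ) := by
  have hLL : 0 < logb 2 (logb 2 n) := logb_pos one_lt_two hL
  have hlog : logb 2 (logb 2 n) < logb 2 (n ^ (1 / φ)) := by
    rw [logb_rpow_eq_mul_logb_of_pos hn, one_div_mul_eq_div, lt_div_iff₀ hφ, mul_comm]
    exact (lt_div_iff₀ hLL).mp hφ_lt
  exact (logb_lt_logb_iff one_lt_two (by linarith) (by positivity)).mp hlog

lemma ceil_exponent_ratio_le_half {x : ℝ} (hx : 3 ≤ x) :
    (2 * (12 * (⌈x⌉₊ : ℝ)) - 2) / (24 * (⌈x ^ 2⌉₊ : ℝ) + 1 - 1) ≤ 1 / 2 := by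
  have ha : (⌈x⌉₊ : ℝ) < x + 1 := Nat.ceil_lt_add_one (by linarith)
  have hb : x ^ 2 ≤ (⌈x ^ 2⌉₊ : ℝ) := Nat.le_ceil _
  rw [add_sub_cancel_right, div_le_iff₀ (by nlinarith)]
  nlinarith

lemma half_le_exp_neg {t : ℝ} (ht : t ≤ 1 / 2) : 1 / 2 ≤ exp (-t) := by
  linarith [add_one_le_exp (-t)]

lemma two_mul_sq_le_exp_three_mul {x : ℝ} (hx : 0 ≤ x) : 2 * x ^ 2 ≤ exp (3 * x) := by
  nlinarith [quadratic_le_exp_of_nonneg (by positivity : 0 ≤ 3 * x)]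

lemma exp_neg_ceil_expr_le_one_div_two_mul_sq {x : ℝ} (hx : 3 ≤ x) :
    exp (-(12 * (⌈x⌉₊ : ℝ) / 2) *
        exp (-(2 * (12 * (⌈x⌉₊ : ℝ)) - 2) / (24 * (⌈x ^ 2⌉₊ : ℝ) + 1 - 1))) ≤
      1 / (2 * x ^ 2) := by
  rw [neg_div]
  set E := exp (-((2 * (12 * (⌈x⌉₊ : ℝ)) - 2) / (24 * (⌈x ^ 2⌉₊ : ℝ) + 1 - 1)))
  have hE : 1 / 2 ≤ E := half_le_exp_neg (ceil_exponent_ratio_le_half hx)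
  have hm : 6 * x ≤ 12 * (⌈x⌉₊ : ℝ) / 2 := by linarith [Nat.le_ceil x]
  calc exp (-(12 * (⌈x⌉₊ : ℝ) / 2) * E)
      ≤ exp (-(3 * x)) := exp_le_exp.mpr (by nlinarith)
    _ = 1 / exp (3 * x) := by rw [exp_neg, one_div]
    _ ≤ 1 / (2 * x ^ 2) :=
        one_div_le_one_div_of_le (by positivity) (two_mul_sq_le_exp_three_mul (by linarith))

/-- lower-endpoint evaluation in the proof of Lemma 1.
For all sufficiently large `n` and all real `1 ≤ φ < log n / log log n`
(logs base 2), with `m = 12·⌈n^(1/(2φ))⌉` and `k = 24·⌈n^(1/φ)⌉ + 1`,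
one has `exp(−(m/2)·exp(−(2m−2)/(k−1))) ≤ 1/(2·n^(1/φ))`. -/
theorem lower_endpoint_eval :
    ∃ N : ℕ, ∀ n : ℕ, N ≤ n → ∀ φ : ℝ, 1 ≤ φ →
      φ < Real.logb 2 n / Real.logb 2 (Real.logb 2 n) →
      ∀ m k : ℝ, m = 12 * (⌈(n : ℝ) ^ (1 / (2 * φ))⌉₊ : ℝ) →
        k = 24 * (⌈(n : ℝ) ^ (1 / φ)⌉₊ : ℝ) + 1 →
        Real.exp (-(m / 2) * Real.exp (-(2 * m - 2) / (k - 1))) ≤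
          1 / (2 * (n : ℝ) ^ (1 / φ)) := by
  refine ⟨2 ^ 9, fun n hn φ hφ hφ_lt m k hm hk => ?_⟩
  have hn_pos : (0 : ℝ) < n := by positivity
  have hφ_pos : 0 < φ := by linarith
  have hL : 9 ≤ logb 2 n := by
    rw [le_logb_iff_rpow_le one_lt_two hn_pos]
    exact_mod_cast hn
  have hlog_lt := logb_lt_rpow_inv_of_lt_div_logb_logb hn_pos hφ_pos (by linarith) hφ_lt
  set x := (n : ℝ) ^ (1 / (2 * φ))
  have hx_sq : x ^ 2 = (n : ℝ) ^ (1 / φ) := by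
    rw [← rpow_natCast, ← rpow_mul hn_pos.le]
    congr 1
    push_cast
    field_simp
  have hx : 3 ≤ x := by nlinarith [rpow_nonneg hn_pos.le (1 / (2 * φ))]
  subst hm hk
  rw [← hx_sq]
  exact exp_neg_ceil_expr_le_one_div_two_mul_sq hx
end

section
/- There exists a natural number N such that for all natural numbers n ≥ N and all real φ with 1 ≤ φ < log n / log log n, setting m = ⌈(12/φ)·n^{1/φ}·ln n⌉ and k = 24·⌈n^{1/φ}⌉ + 1, one has exp(−(m/2)·exp(−(2m−2)/(k−1))) ≤ 1/(2·n^{1/φ}). (Upper-endpoint evaluation in the proof of Lemma 1.) -/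
/-!
Write `x = n^(1/φ)`. The constraint on `φ` says exactly that `log₂ n < x`, so `x ≥ 4` once
`n ≥ 16`. Moreover `m ≈ 12 x ln x` and `k - 1 ≥ 24 x`, hence `(2m - 2)/(k - 1) ≤ ln x`, so the
inner exponential is at least `1/x` and the outer exponent is at least `6 ln x ≥ ln (2x)`.
-/

open Real

lemma logb_lt_rpow_one_div_of_lt_div {n φ : ℝ} (hn : 0 < n) (hφ : 0 < φ)
    (hL : 1 < logb 2 n) (h : φ < logb 2 n / logb 2 (logb 2 n)) :
    logb 2 n < n ^ (1 / φ) := by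
  have hLL : 0 < logb 2 (logb 2 n) := logb_pos one_lt_two hL
  have hlt : logb 2 (logb 2 n) < logb 2 n / φ := by
    rw [lt_div_iff₀ hLL] at h
    rw [lt_div_iff₀ hφ]
    linarith
  rw [logb_lt_iff_lt_rpow one_lt_two (by linarith)] at hlt
  calc logb 2 n < 2 ^ (logb 2 n / φ) := hlt
    _ = n ^ (1 / φ) := by
      rw [div_eq_mul_one_div, rpow_mul zero_le_two, rpow_logb two_pos one_lt_two.ne' hn]

lemma two_mul_sub_two_div_le_log {x m k : ℝ} (hx : 1 ≤ x)
    (hm : m ≤ 12 * (x * log x) + 1) (hk : 24 * x ≤ k - 1) :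
    (2 * m - 2) / (k - 1) ≤ log x := by
  have hlog : 0 ≤ log x := log_nonneg hx
  rw [div_le_iff₀ (by linarith)]
  nlinarith [mul_le_mul_of_nonneg_right hk hlog]

lemma exp_neg_mul_exp_le_one_div_two_mul {x m k : ℝ} (hx : 2 ≤ x)
    (hm_lb : 12 * (x * log x) ≤ m) (hm_ub : m ≤ 12 * (x * log x) + 1)
    (hk : 24 * x ≤ k - 1) :
    exp (-(m / 2) * exp (-(2 * m - 2) / (k - 1))) ≤ 1 / (2 * x) := by
  have hx0 : 0 < x := by linarith
  have hlog2 : log 2 ≤ log x := log_le_log two_pos hx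
  have hlog : 0 < log x := (log_pos one_lt_two).trans_le hlog2
  have hinv : x⁻¹ ≤ exp (-(2 * m - 2) / (k - 1)) := by
    rw [← exp_log (inv_pos.2 hx0), log_inv, neg_div]
    exact exp_le_exp.2 (neg_le_neg (two_mul_sub_two_div_le_log (by linarith) hm_ub hk))
  have hexponent : log (2 * x) ≤ m / 2 * exp (-(2 * m - 2) / (k - 1)) :=
    calc log (2 * x) = log 2 + log x := log_mul two_ne_zero hx0.ne'
      _ ≤ 6 * (x * log x) * x⁻¹ := by
        rw [mul_assoc, mul_comm x, mul_assoc, mul_inv_cancel₀ hx0.ne']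
        linarith
      _ ≤ m / 2 * exp (-(2 * m - 2) / (k - 1)) :=
        mul_le_mul (by linarith) hinv (inv_nonneg.2 hx0.le) (by nlinarith [mul_pos hx0 hlog])
  calc exp (-(m / 2) * exp (-(2 * m - 2) / (k - 1))) ≤ exp (-log (2 * x)) :=
        exp_le_exp.2 (by linarith)
    _ = 1 / (2 * x) := by rw [exp_neg, exp_log (by positivity), one_div]

/-- upper-endpoint evaluation in the proof of Lemma 1.
For all sufficiently large `n` and all real `1 ≤ φ < log n / log log n`
(logs base 2), with `m = ⌈(12/φ)·n^(1/φ)·ln n⌉` and `k = 24·⌈n^(1/φ)⌉ + 1`,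
one has `exp(−(m/2)·exp(−(2m−2)/(k−1))) ≤ 1/(2·n^(1/φ))`. -/
theorem upper_endpoint_eval :
    ∃ N : ℕ, ∀ n : ℕ, N ≤ n → ∀ φ : ℝ, 1 ≤ φ →
      φ < Real.logb 2 n / Real.logb 2 (Real.logb 2 n) →
      ∀ m k : ℝ, m = (⌈12 / φ * (n : ℝ) ^ (1 / φ) * Real.log n⌉₊ : ℝ) →
        k = 24 * (⌈(n : ℝ) ^ (1 / φ)⌉₊ : ℝ) + 1 →
        Real.exp (-(m / 2) * Real.exp (-(2 * m - 2) / (k - 1))) ≤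
          1 / (2 * (n : ℝ) ^ (1 / φ)) := by
  refine ⟨16, fun n hn φ hφ hφn m k hm hk => ?_⟩
  have hn16 : (16 : ℝ) ≤ n := by exact_mod_cast hn
  have hL : 4 ≤ logb 2 n := by
    rw [show (4 : ℝ) = logb 2 16 by
      rw [show (16 : ℝ) = 2 ^ (4 : ℝ) by norm_num, logb_rpow two_pos one_lt_two.ne']]
    exact logb_le_logb_of_le one_lt_two (by norm_num) hn16
  set x := (n : ℝ) ^ (1 / φ)
  have hx : logb 2 n < x :=
    logb_lt_rpow_one_div_of_lt_div (by linarith) (by linarith) (by linarith) hφn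
  have hmx : 12 / φ * x * log n = 12 * (x * log x) := by
    rw [log_rpow (by linarith)]
    field_simp
  rw [hmx] at hm
  apply exp_neg_mul_exp_le_one_div_two_mul (by linarith)
  · exact hm ▸ Nat.le_ceil _
  · exact hm ▸ (Nat.ceil_lt_add_one (by nlinarith [log_nonneg (by linarith : (1 : ℝ) ≤ x)])).le
  · linarith [Nat.le_ceil x]
end

section
/- Let n ≥ 4 be a natural number and φ a real number with 1 ≤ φ < log n / log log n. Set a = ⌈φ·log n / (log n − φ·log φ)⌉ and q = φ / n^{1/φ}. Let n̂ be an integer with 1 ≤ n̂ ≤ n and let X₁, …, X_{n̂} be independent geometric random variables with parameter q (paper's convention), and define Y_i = min(X_i, a). Then with probability at least 1 − 2/n² there exists an integer y ∈ {1, …, a} such that the number of indices i with Y_i = y is at least 1 and at most (12/φ)·n^{1/φ}·ln n. (Lemma 2 of the paper.) -/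
/-!
Let `y₀` be the largest value taken by the truncated variables `Yᵢ = min(Xᵢ, a)`. It is taken at
least once, so the claim can only fail if `y₀` is crowded: at least `K = ⌊B⌋ + 1` of the `Yᵢ`
equal `y₀` and none exceeds it, where `B = (12/φ)·n^(1/φ)·ln n`. Bounding the probability of such
a pattern with `k ≥ K` hits by `t^(k-K)` times itself and summing over all patterns gives
`t^(-K)·(t·P(Y = y) + P(Y < y))^n̂`. For a level `y < a` the choice `t = 1/(1-q)` collapses this
to `(1-q)^K ≤ n^(-12)`; for `y = a` the choice `t = 2` gives
`2^(-K)·(1 + q^(a-1))^n̂ ≤ e^(1/q)·2^(-K)`, which is small because `n·q^a ≤ 1` by the choice of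
`a`. A union bound over the at most `log n + 1` levels gives `2/n²`. For `n < 16` no estimate is
needed: every count is at most `n̂ ≤ 15 < B`.
-/

open MeasureTheory ProbabilityTheory

theorem one_sub_le_measure_of_measure_compl_le {α : Type*} [MeasurableSpace α] {μ : Measure α}
    [IsProbabilityMeasure μ] {s : Set α} {ε : ENNReal} (h : μ sᶜ ≤ ε) : 1 - ε ≤ μ s := by
  rw [tsub_le_iff_right, ← measure_univ (μ := μ)]
  exact (measure_univ_le_add_compl s).trans (by gcongr)

def HasGeometricLaw {Ω : Type*} [MeasurableSpace Ω] (μ : Measure Ω) (Z : Ω → ℕ) (q : ℝ) :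
    Prop :=
  ∀ j : ℕ, 1 ≤ j → μ {ω | Z ω = j} = ENNReal.ofReal ((1 - q) * q ^ (j - 1))

namespace HasGeometricLaw

variable {Ω : Type*} [MeasurableSpace Ω] {μ : Measure Ω} {Z : Ω → ℕ} {q : ℝ}

theorem measure_preimage_Ici (h : HasGeometricLaw μ Z q) (hZ : Measurable Z) (hq0 : 0 ≤ q)
    (hq1 : q < 1) {y : ℕ} (hy : 1 ≤ y) :
    μ (Z ⁻¹' Set.Ici y) = ENNReal.ofReal (q ^ (y - 1)) := by
  have hunion : Z ⁻¹' Set.Ici y = ⋃ j : ℕ, {ω | Z ω = y + j} := by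
    ext ω
    simp only [Set.mem_preimage, Set.mem_Ici, Set.mem_iUnion, Set.mem_ofPred_eq]
    exact ⟨fun h => ⟨Z ω - y, by omega⟩, by rintro ⟨j, hj⟩; omega⟩
  have hdisj : Pairwise (Function.onFun Disjoint fun j : ℕ => {ω | Z ω = y + j}) := fun j k hjk =>
    Set.disjoint_left.2 fun ω h1 h2 => hjk (by simp only [Set.mem_ofPred_eq] at h1 h2; omega)
  have hterm : ∀ j : ℕ, μ {ω | Z ω = y + j} = ENNReal.ofReal ((1 - q) * q ^ (y - 1) * q ^ j) :=
    fun j => by rw [h _ (by omega), show y + j - 1 = y - 1 + j by omega, pow_add, mul_assoc]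
  rw [hunion, measure_iUnion hdisj fun j => hZ (measurableSet_singleton _)]
  simp_rw [hterm]
  rw [← ENNReal.ofReal_tsum_of_nonneg (fun j => by have := sub_nonneg.2 hq1.le; positivity)
      ((summable_geometric_of_lt_one hq0 hq1).mul_left _), tsum_mul_left,
    tsum_geometric_of_lt_one hq0 hq1]
  congr 1
  field_simp [(sub_pos.2 hq1).ne']

variable [IsProbabilityMeasure μ]

theorem measure_preimage_Iio (h : HasGeometricLaw μ Z q) (hZ : Measurable Z) (hq0 : 0 ≤ q)
    (hq1 : q < 1) {y : ℕ} (hy : 1 ≤ y) :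
    μ (Z ⁻¹' Set.Iio y) = ENNReal.ofReal (1 - q ^ (y - 1)) := by
  rw [← Set.compl_Ici, Set.preimage_compl, prob_compl_eq_one_sub (hZ measurableSet_Ici),
    h.measure_preimage_Ici hZ hq0 hq1 hy, ENNReal.ofReal_sub _ (by positivity),
    ENNReal.ofReal_one]

theorem ae_one_le (h : HasGeometricLaw μ Z q) (hZ : Measurable Z) (hq0 : 0 ≤ q)
    (hq1 : q < 1) : ∀ᵐ ω ∂μ, 1 ≤ Z ω := by
  have hzero : μ (Z ⁻¹' {0}) = 0 := by simpa using h.measure_preimage_Iio hZ hq0 hq1 le_rfl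
  rw [ae_iff]
  simp only [not_le, Nat.lt_one_iff]
  exact hzero

end HasGeometricLaw

open Finset in
theorem measure_le_card_filter_mem_le {ι Ω E : Type*} [Fintype ι] [MeasurableSpace Ω]
    [MeasurableSpace E] {μ : Measure Ω} {X : ι → Ω → E} (hind : iIndepFun X μ) {A B : Set E}
    [DecidablePred (· ∈ A)] (hA : MeasurableSet A) (hB : MeasurableSet B) {α β t : ℝ}
    (hα : 0 ≤ α) (hβ : 0 ≤ β) (ht : 1 ≤ t) (hXA : ∀ i, μ (X i ⁻¹' A) ≤ ENNReal.ofReal α)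
    (hXB : ∀ i, μ (X i ⁻¹' B) ≤ ENNReal.ofReal β) (K : ℕ) :
    μ {ω | K ≤ #{i | X i ω ∈ A} ∧ ∀ i, X i ω ∈ A ∪ B} ≤
      ENNReal.ofReal ((t * α + β) ^ Fintype.card ι / t ^ K) := by
  classical
  set pattern : Finset ι → Set Ω := fun S => ⋂ i, X i ⁻¹' if i ∈ S then A else B
  have hsub : {ω | K ≤ #{i | X i ω ∈ A} ∧ ∀ i, X i ω ∈ A ∪ B} ⊆
      ⋃ S ∈ univ.filter (fun S : Finset ι => K ≤ #S), pattern S := by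
    rintro ω ⟨hK, hAB⟩
    refine Set.mem_iUnion₂.2
      ⟨univ.filter (fun i => X i ω ∈ A), by simpa using hK, Set.mem_iInter.2 fun i => ?_⟩
    by_cases hi : X i ω ∈ A
    · simp [hi]
    · simpa [hi] using (hAB i).resolve_left hi
  have hpattern : ∀ S, μ (pattern S) ≤ ENNReal.ofReal (α ^ #S * β ^ (Fintype.card ι - #S)) := by
    intro S
    rw [hind.meas_iInter fun i => ⟨_, by split_ifs; exacts [hA, hB], rfl⟩]
    calc ∏ i, μ (X i ⁻¹' if i ∈ S then A else B)
        ≤ ∏ i, ENNReal.ofReal (if i ∈ S then α else β) :=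
          prod_le_prod' fun i _ => by split_ifs; exacts [hXA i, hXB i]
      _ = ENNReal.ofReal (∏ i, if i ∈ S then α else β) :=
          (ENNReal.ofReal_prod_of_nonneg fun i _ => by split_ifs <;> assumption).symm
      _ = ENNReal.ofReal (α ^ #S * β ^ (Fintype.card ι - #S)) := by
          rw [prod_ite, prod_const, prod_const, filter_mem_eq_inter, univ_inter,
            filter_not, filter_mem_eq_inter, univ_inter, card_sdiff_of_subset (subset_univ S),
            card_univ]
  have hterm : ∀ S : Finset ι, K ≤ #S → α ^ #S * β ^ (Fintype.card ι - #S) ≤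
      (t * α) ^ #S * β ^ (Fintype.card ι - #S) / t ^ K := by
    intro S hS
    rw [le_div_iff₀ (by positivity)]
    calc α ^ #S * β ^ (Fintype.card ι - #S) * t ^ K
        ≤ α ^ #S * β ^ (Fintype.card ι - #S) * t ^ #S := by gcongr
      _ = (t * α) ^ #S * β ^ (Fintype.card ι - #S) := by ring
  calc μ {ω | K ≤ #{i | X i ω ∈ A} ∧ ∀ i, X i ω ∈ A ∪ B}
      ≤ ∑ S ∈ univ.filter (fun S : Finset ι => K ≤ #S), μ (pattern S) :=
        (measure_mono hsub).trans (measure_biUnion_finset_le _ _)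
    _ ≤ ∑ S, ENNReal.ofReal ((t * α) ^ #S * β ^ (Fintype.card ι - #S) / t ^ K) := by
        refine (sum_le_sum fun S hS => (hpattern S).trans
          (ENNReal.ofReal_le_ofReal (hterm S (mem_filter.1 hS).2))).trans ?_
        exact sum_le_sum_of_subset (filter_subset _ _)
    _ = ENNReal.ofReal ((t * α + β) ^ Fintype.card ι / t ^ K) := by
        rw [← ENNReal.ofReal_sum_of_nonneg fun S _ => by positivity, ← sum_div,
          Fintype.sum_pow_mul_eq_add_pow]

section Levels

open Finset

def topLevelCrowded {ι Ω : Type*} [Fintype ι] (Y : ι → Ω → ℕ) (y K : ℕ) : Set Ω :=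
  {ω | K ≤ #{i | Y i ω = y} ∧ ∀ i, Y i ω ≤ y}

theorem exists_top_level {ι : Type*} [Fintype ι] [Nonempty ι] {Z : ι → ℕ} {a : ℕ} (ha : 1 ≤ a)
    (hZ : ∀ i, 1 ≤ Z i) :
    ∃ y, 1 ≤ y ∧ y ≤ a ∧ 1 ≤ #{i | min (Z i) a = y} ∧ ∀ i, min (Z i) a ≤ y := by
  obtain ⟨i₀, -, hmax⟩ := exists_max_image univ (fun i => min (Z i) a) univ_nonempty
  exact ⟨min (Z i₀) a, le_min (hZ i₀) ha, min_le_right _ _,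
    card_pos.2 ⟨i₀, by simp⟩, fun i => hmax i (mem_univ i)⟩

variable {ι Ω : Type*} [Fintype ι] [MeasurableSpace Ω] {μ : Measure Ω}

theorem measure_topLevelCrowded_le {Y : ι → Ω → ℕ} (hind : iIndepFun Y μ) {y : ℕ}
    {α β t : ℝ} (hα : 0 ≤ α) (hβ : 0 ≤ β) (ht : 1 ≤ t)
    (hYy : ∀ i, μ (Y i ⁻¹' {y}) ≤ ENNReal.ofReal α)
    (hYlt : ∀ i, μ (Y i ⁻¹' Set.Iio y) ≤ ENNReal.ofReal β) (K : ℕ) :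
    μ (topLevelCrowded Y y K) ≤ ENNReal.ofReal ((t * α + β) ^ Fintype.card ι / t ^ K) := by
  convert measure_le_card_filter_mem_le hind (measurableSet_singleton y) measurableSet_Iio
    hα hβ ht hYy hYlt K using 2
  ext ω
  simp [topLevelCrowded, le_iff_eq_or_lt]

variable [IsProbabilityMeasure μ] {X : ι → Ω → ℕ} {q : ℝ}

theorem measure_topLevelCrowded_min_le_of_lt (hind : iIndepFun X μ)
    (hmeas : ∀ i, Measurable (X i)) (hgeo : ∀ i, HasGeometricLaw μ (X i) q) (hq0 : 0 ≤ q)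
    (hq1 : q < 1) {a y : ℕ} (hy : 1 ≤ y) (hya : y < a) (K : ℕ) :
    μ (topLevelCrowded (fun i ω => min (X i ω) a) y K) ≤ ENNReal.ofReal ((1 - q) ^ K) := by
  have hq : 0 < 1 - q := sub_pos.2 hq1
  have hlevel : ∀ i, (fun ω => min (X i ω) a) ⁻¹' {y} = {ω | X i ω = y} := fun i => by
    ext ω; simp only [Set.mem_preimage, Set.mem_singleton_iff, Set.mem_ofPred_eq]; omega
  have hbelow : ∀ i, (fun ω => min (X i ω) a) ⁻¹' Set.Iio y = X i ⁻¹' Set.Iio y := fun i => by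
    ext ω; simp only [Set.mem_preimage, Set.mem_Iio]; omega
  have hindY : iIndepFun (fun i ω => min (X i ω) a) μ :=
    hind.comp (fun _ x => min x a) fun _ => .of_discrete
  convert measure_topLevelCrowded_le hindY (t := 1 / (1 - q)) (by positivity)
    (sub_nonneg.2 (pow_le_one₀ hq0 hq1.le)) (one_le_one_div hq (by linarith))
    (fun i => (hlevel i ▸ hgeo i y hy).le)
    (fun i => (hbelow i ▸ (hgeo i).measure_preimage_Iio (hmeas i) hq0 hq1 hy).le) K using 2
  rw [← mul_assoc, one_div_mul_cancel hq.ne', one_mul, add_sub_cancel, one_pow, one_div_pow,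
    one_div_one_div]

theorem measure_topLevelCrowded_min_self_le (hind : iIndepFun X μ)
    (hmeas : ∀ i, Measurable (X i)) (hgeo : ∀ i, HasGeometricLaw μ (X i) q) (hq0 : 0 ≤ q)
    (hq1 : q < 1) {a : ℕ} (ha : 1 ≤ a) (K : ℕ) :
    μ (topLevelCrowded (fun i ω => min (X i ω) a) a K) ≤
      ENNReal.ofReal ((1 + q ^ (a - 1)) ^ Fintype.card ι / 2 ^ K) := by
  have hlevel : ∀ i, (fun ω => min (X i ω) a) ⁻¹' {a} = X i ⁻¹' Set.Ici a := fun i => by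
    ext ω; simp
  have hbelow : ∀ i, (fun ω => min (X i ω) a) ⁻¹' Set.Iio a = X i ⁻¹' Set.Iio a := fun i => by
    ext ω; simp
  have hindY : iIndepFun (fun i ω => min (X i ω) a) μ :=
    hind.comp (fun _ x => min x a) fun _ => .of_discrete
  convert measure_topLevelCrowded_le hindY (t := 2) (by positivity)
    (sub_nonneg.2 (pow_le_one₀ hq0 hq1.le)) one_le_two
    (fun i => (hlevel i ▸ (hgeo i).measure_preimage_Ici (hmeas i) hq0 hq1 ha).le)
    (fun i => (hbelow i ▸ (hgeo i).measure_preimage_Iio (hmeas i) hq0 hq1 ha).le) K using 2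
  ring

variable [Nonempty ι]

theorem measure_compl_exists_level_eq_zero (hmeas : ∀ i, Measurable (X i))
    (hgeo : ∀ i, HasGeometricLaw μ (X i) q) (hq0 : 0 ≤ q) (hq1 : q < 1) {a : ℕ} (ha : 1 ≤ a)
    {B : ℝ} (hB : (Fintype.card ι : ℝ) ≤ B) :
    μ {ω | ∃ y, 1 ≤ y ∧ y ≤ a ∧ 1 ≤ #{i | min (X i ω) a = y} ∧
        (#{i | min (X i ω) a = y} : ℝ) ≤ B}ᶜ = 0 := by
  refine measure_mono_null (t := {ω | ¬ ∀ i, 1 ≤ X i ω}) (fun ω hω hpos => ?_)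
    (ae_iff.1 <| ae_all_iff.2 fun i => (hgeo i).ae_one_le (hmeas i) hq0 hq1)
  obtain ⟨y, hy1, hya, hcard, -⟩ := exists_top_level ha hpos
  exact hω ⟨y, hy1, hya, hcard, le_trans (by exact_mod_cast card_le_univ _) hB⟩

theorem measure_compl_exists_sparse_level_le (hind : iIndepFun X μ) (hmeas : ∀ i, Measurable (X i))
    (hgeo : ∀ i, HasGeometricLaw μ (X i) q) (hq0 : 0 ≤ q) (hq1 : q < 1) {a : ℕ} (ha : 1 ≤ a)
    {B : ℝ} (hB : 0 ≤ B) :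
    μ {ω | ∃ y, 1 ≤ y ∧ y ≤ a ∧ 1 ≤ #{i | min (X i ω) a = y} ∧
        (#{i | min (X i ω) a = y} : ℝ) ≤ B}ᶜ ≤
      ENNReal.ofReal ((a - 1 : ℕ) * (1 - q) ^ (⌊B⌋₊ + 1) +
        (1 + q ^ (a - 1)) ^ Fintype.card ι / 2 ^ (⌊B⌋₊ + 1)) := by
  set K := ⌊B⌋₊ + 1
  set crowded := fun y => topLevelCrowded (fun i ω => min (X i ω) a) y K
  have hsub : {ω | ∃ y, 1 ≤ y ∧ y ≤ a ∧ 1 ≤ #{i | min (X i ω) a = y} ∧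
      (#{i | min (X i ω) a = y} : ℝ) ≤ B}ᶜ ⊆
      {ω | ¬ ∀ i, 1 ≤ X i ω} ∪ ⋃ y ∈ Icc 1 a, crowded y := by
    intro ω hω
    by_cases hpos : ∀ i, 1 ≤ X i ω
    · obtain ⟨y, hy1, hya, hcard, htop⟩ := exists_top_level ha hpos
      exact Or.inr <| Set.mem_iUnion₂.2 ⟨y, mem_Icc.2 ⟨hy1, hya⟩,
        Nat.succ_le_of_lt ((Nat.floor_lt hB).2 (not_le.1 fun hK => hω ⟨y, hy1, hya, hcard, hK⟩)),
        htop⟩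
    · exact Or.inl hpos
  have hnull : μ {ω | ¬ ∀ i, 1 ≤ X i ω} = 0 :=
    ae_iff.1 <| ae_all_iff.2 fun i => (hgeo i).ae_one_le (hmeas i) hq0 hq1
  calc μ _ ≤ μ {ω | ¬ ∀ i, 1 ≤ X i ω} + μ (⋃ y ∈ Icc 1 a, crowded y) :=
        (measure_mono hsub).trans (measure_union_le _ _)
    _ ≤ ∑ y ∈ Ico 1 a, μ (crowded y) + μ (crowded a) := by
        rw [hnull, zero_add, add_comm, ← sum_insert (f := fun y => μ (crowded y)) (by simp),
          Ico_insert_right ha]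
        exact measure_biUnion_finset_le _ _
    _ ≤ ∑ y ∈ Ico 1 a, ENNReal.ofReal ((1 - q) ^ K) +
          ENNReal.ofReal ((1 + q ^ (a - 1)) ^ Fintype.card ι / 2 ^ K) := by
        gcongr with y hy
        · exact measure_topLevelCrowded_min_le_of_lt hind hmeas hgeo hq0 hq1
            (mem_Ico.1 hy).1 (mem_Ico.1 hy).2 K
        · exact measure_topLevelCrowded_min_self_le hind hmeas hgeo hq0 hq1 ha K
    _ = _ := by
        rw [sum_const, Nat.card_Ico, nsmul_eq_mul, ← ENNReal.ofReal_natCast,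
          ← ENNReal.ofReal_mul (by positivity), ← ENNReal.ofReal_add (by positivity)
          (by positivity)]

end Levels

section Arithmetic

open Real

theorem natCast_le_logb_two {x : ℝ} {k : ℕ} (h : (2 : ℝ) ^ k ≤ x) : (k : ℝ) ≤ logb 2 x :=
  (le_logb_iff_rpow_le one_lt_two (lt_of_lt_of_le (by positivity) h)).2 (by rwa [rpow_natCast])

theorem mul_add_logb_lt_logb {x φ : ℝ} {c : ℕ} (hx : (2 : ℝ) ^ 2 ^ 2 ^ c ≤ x) (hφ : 0 < φ)
    (h : φ < logb 2 x / logb 2 (logb 2 x)) : φ * (c + logb 2 φ) < logb 2 x := by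
  have hL := natCast_le_logb_two hx
  push_cast at hL
  have hl := natCast_le_logb_two hL
  push_cast at hl
  have hc := natCast_le_logb_two hl
  have hl0 : 0 < logb 2 (logb 2 x) := lt_of_lt_of_le (by positivity) hl
  have hφl : φ * logb 2 (logb 2 x) < logb 2 x := (lt_div_iff₀ hl0).1 h
  have hlog : logb 2 (φ * logb 2 (logb 2 x)) < logb 2 (logb 2 x) :=
    logb_lt_logb one_lt_two (by positivity) hφl
  rw [logb_mul hφ.ne' hl0.ne'] at hlog
  calc φ * (c + logb 2 φ) ≤ φ * (logb 2 φ + logb 2 (logb 2 (logb 2 x))) :=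
        mul_le_mul_of_nonneg_left (by linarith) hφ.le
    _ < φ * logb 2 (logb 2 x) := mul_lt_mul_of_pos_left hlog hφ
    _ < logb 2 x := hφl

section Parameters

variable {x φ : ℝ}

theorem logb_div_rpow_one_div (hx : 0 < x) (hφ : 0 < φ) :
    logb 2 (φ / x ^ (1 / φ)) = -((logb 2 x - φ * logb 2 φ) / φ) := by
  rw [logb_div hφ.ne' (by positivity), logb_rpow_eq_mul_logb_of_pos hx]
  field_simp
  ring

theorem div_rpow_one_div_lt_one (hx : 0 < x) (hφ : 0 < φ) (hd : φ * logb 2 φ < logb 2 x) :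
    φ / x ^ (1 / φ) < 1 := by
  rw [← logb_neg_iff one_lt_two (by positivity), logb_div_rpow_one_div hx hφ, neg_lt_zero]
  exact div_pos (sub_pos.2 hd) hφ

theorem mul_div_rpow_one_div_pow_le_one (hx : 0 < x) (hφ : 0 < φ)
    (hd : φ * logb 2 φ < logb 2 x) {a : ℕ}
    (ha : φ * logb 2 x / (logb 2 x - φ * logb 2 φ) ≤ a) : x * (φ / x ^ (1 / φ)) ^ a ≤ 1 := by
  rw [div_le_iff₀ (sub_pos.2 hd)] at ha
  rw [← le_div_iff₀' hx, ← logb_le_logb one_lt_two (by positivity) (by positivity), logb_pow,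
    logb_div_rpow_one_div hx hφ, one_div, logb_inv, mul_neg, neg_le_neg_iff, mul_div_assoc',
    le_div_iff₀ hφ]
  linarith

theorem ceil_sub_one_le_logb (hφ : 1 ≤ φ) (hd : φ * (1 + logb 2 φ) < logb 2 x) :
    ((⌈φ * logb 2 x / (logb 2 x - φ * logb 2 φ)⌉₊ - 1 : ℕ) : ℝ) ≤ logb 2 x := by
  have hlogφ : 0 ≤ logb 2 φ := logb_nonneg one_lt_two hφ
  have hdφ : φ < logb 2 x - φ * logb 2 φ := by linarith
  have hL : 0 < logb 2 x := by nlinarith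
  have hratio : φ * logb 2 x / (logb 2 x - φ * logb 2 φ) ≤ logb 2 x := by
    rw [div_le_iff₀ (by linarith)]
    nlinarith
  have hpos : 0 < φ * logb 2 x / (logb 2 x - φ * logb 2 φ) :=
    div_pos (by positivity) (by linarith)
  have hceil := Nat.ceil_lt_add_one hpos.le
  rw [Nat.cast_pred (Nat.ceil_pos.2 hpos)]
  linarith

end Parameters

theorem fifteen_lt_twelve_mul_log {x : ℝ} (hx : 4 ≤ x) : 15 < 12 * log x := by
  have h4 : log 4 ≤ log x := log_le_log (by norm_num) hx
  rw [show (4 : ℝ) = 2 ^ 2 by norm_num, log_pow, Nat.cast_ofNat] at h4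
  linarith [log_two_gt_d9]

theorem one_sub_pow_le_exp {q : ℝ} (hq : q ≤ 1) (K : ℕ) : (1 - q) ^ K ≤ exp (-(q * K)) :=
  calc (1 - q) ^ K ≤ exp (-q) ^ K := pow_le_pow_left₀ (sub_nonneg.2 hq) (one_sub_le_exp_neg q) K
    _ = exp (-(q * K)) := by rw [← exp_nat_mul]; ring_nf

theorem one_add_pow_le_exp {p : ℝ} (hp : 0 ≤ p) (m : ℕ) : (1 + p) ^ m ≤ exp (m * p) :=
  calc (1 + p) ^ m ≤ exp p ^ m := pow_le_pow_left₀ (by linarith) (by linarith [add_one_le_exp p]) m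
    _ = exp (m * p) := (exp_nat_mul p m).symm

theorem exp_neg_mul_log (k : ℕ) {x : ℝ} (hx : 0 < x) : exp (-(k * log x)) = 1 / x ^ k := by
  rw [exp_neg, exp_nat_mul, exp_log hx, one_div]

theorem mul_one_sub_pow_le {n : ℕ} {c q : ℝ} {K : ℕ} (hn : 0 < n) (hc : c ≤ n) (hq : q ≤ 1)
    (hK : 12 * log n ≤ q * K) : c * (1 - q) ^ K ≤ 1 / (n : ℝ) ^ 2 := by
  have hn' : (0 : ℝ) < n := by exact_mod_cast hn
  have hlog : 0 ≤ log n := log_natCast_nonneg n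
  calc c * (1 - q) ^ K ≤ exp (log n) * exp (-(q * K)) :=
        mul_le_mul (by rwa [exp_log hn']) (one_sub_pow_le_exp hq K)
          (pow_nonneg (sub_nonneg.2 hq) K) (exp_nonneg _)
    _ ≤ exp (-((2 : ℕ) * log n)) := by rw [← exp_add]; gcongr; push_cast; linarith
    _ = 1 / (n : ℝ) ^ 2 := exp_neg_mul_log 2 hn'

theorem one_add_pow_div_two_pow_le {n m K : ℕ} {p q : ℝ} (hn : 2 ≤ n) (hp : 0 ≤ p) (hq0 : 0 < q)
    (hq1 : q ≤ 1) (hmp : m * p * q ≤ 1) (hK : 12 * log n ≤ q * K) :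
    (1 + p) ^ m / 2 ^ K ≤ 1 / (n : ℝ) ^ 2 := by
  have hn' : (2 : ℝ) ≤ n := by exact_mod_cast hn
  have hlog2 := log_two_gt_d9
  have hlogn : log 2 ≤ log n := log_le_log two_pos hn'
  have hexp : 1 / q + 2 * log n ≤ K * log 2 := by
    have h12 : 12 * log n * log 2 ≤ q * K * log 2 := mul_le_mul_of_nonneg_right hK (by positivity)
    have hq : q * log n ≤ log n := mul_le_of_le_one_left (by linarith) hq1
    have h9 : log n * 0.6931471803 ≤ log n * log 2 :=
      mul_le_mul_of_nonneg_left hlog2.le (by linarith)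
    rw [div_add' _ _ _ hq0.ne', div_le_iff₀ hq0]
    nlinarith
  calc (1 + p) ^ m / 2 ^ K ≤ exp (1 / q) / exp (K * log 2) := by
        rw [exp_nat_mul, exp_log two_pos]
        gcongr
        exact (one_add_pow_le_exp hp m).trans (exp_le_exp.2 ((le_div_iff₀ hq0).2 hmp))
    _ ≤ exp (-((2 : ℕ) * log n)) := by rw [← exp_sub]; gcongr; push_cast; linarith
    _ = 1 / (n : ℝ) ^ 2 := exp_neg_mul_log 2 (by positivity)

theorem sparse_level_error_le {n m a K : ℕ} {q : ℝ} (hn : 2 ≤ n) (hm : m ≤ n) (hq0 : 0 < q)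
    (hq1 : q ≤ 1) (ha : 1 ≤ a) (hqa : n * q ^ a ≤ 1) (han : ((a - 1 : ℕ) : ℝ) ≤ logb 2 n)
    (hK : 12 * log n ≤ q * K) :
    ((a - 1 : ℕ) : ℝ) * (1 - q) ^ K + (1 + q ^ (a - 1)) ^ m / 2 ^ K ≤ 2 / (n : ℝ) ^ 2 := by
  have hlogb : logb 2 n < n := (logb_lt_iff_lt_rpow one_lt_two (by positivity)).2 <| by
    rw [rpow_natCast]; exact_mod_cast n.lt_two_pow_self
  have hmp : m * q ^ (a - 1) * q ≤ 1 :=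
    calc m * q ^ (a - 1) * q = m * q ^ a := by rw [mul_assoc, ← pow_succ, Nat.sub_add_cancel ha]
      _ ≤ n * q ^ a := by gcongr
      _ ≤ 1 := hqa
  have h1 := mul_one_sub_pow_le (by omega) (han.trans hlogb.le) hq1 hK
  have h2 := one_add_pow_div_two_pow_le hn (by positivity) hq0 hq1 hmp hK
  linarith [add_div (1 : ℝ) 1 ((n : ℝ) ^ 2)]

end Arithmetic

/-- Lemma 2 of the paper: let `n ≥ 4`, `1 ≤ φ < log n / log log n`
(logs base 2), `a = ⌈φ·log n / (log n − φ·log φ)⌉`, `q = φ / n^(1/φ)`, and let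
`X₁, …, X_n̂` (`1 ≤ n̂ ≤ n`) be independent `Geo(q)` random variables
(`P(X = j) = (1−q)·q^(j−1)` for `j ≥ 1`).  Setting `Yᵢ = min(Xᵢ, a)`, with
probability at least `1 − 2/n²` some value `y ∈ {1, …, a}` is taken by at
least `1` and at most `(12/φ)·n^(1/φ)·ln n` of the variables `Yᵢ`. -/
theorem geometric_level_choice (n : ℕ) (hn : 4 ≤ n) (φ : ℝ) (hφ1 : 1 ≤ φ)
    (hφ2 : φ < Real.logb 2 n / Real.logb 2 (Real.logb 2 n))
    (a : ℕ) (ha : a = ⌈φ * Real.logb 2 n / (Real.logb 2 n - φ * Real.logb 2 φ)⌉₊)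
    (q : ℝ) (hq : q = φ / (n : ℝ) ^ (1 / φ))
    (nhat : ℕ) (hnhat1 : 1 ≤ nhat) (hnhat2 : nhat ≤ n)
    (Ω : Type*) [MeasurableSpace Ω] (μ : Measure Ω) [IsProbabilityMeasure μ]
    (X : Fin nhat → Ω → ℕ) (hmeas : ∀ i, Measurable (X i))
    (hind : iIndepFun X μ)
    (hgeom : ∀ (i : Fin nhat) (j : ℕ), 1 ≤ j →
      μ {ω | X i ω = j} = ENNReal.ofReal ((1 - q) * q ^ (j - 1))) :
    1 - ENNReal.ofReal (2 / (n : ℝ) ^ 2) ≤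
      μ {ω | ∃ y : ℕ, 1 ≤ y ∧ y ≤ a ∧
        1 ≤ (Finset.univ.filter (fun i : Fin nhat => min (X i ω) a = y)).card ∧
        ((Finset.univ.filter (fun i : Fin nhat => min (X i ω) a = y)).card : ℝ) ≤
          12 / φ * (n : ℝ) ^ (1 / φ) * Real.log n} := by
  set B := 12 / φ * (n : ℝ) ^ (1 / φ) * Real.log n
  have hn' : (4 : ℝ) ≤ n := by exact_mod_cast hn
  have hφ0 : 0 < φ := by linarith
  have hd : φ * Real.logb 2 φ < Real.logb 2 n := by
    simpa using mul_add_logb_lt_logb (c := 0) (by norm_num [hn']) hφ0 hφ2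
  have hq0 : 0 < q := hq ▸ by positivity
  have hq1 : q < 1 := hq ▸ div_rpow_one_div_lt_one (by positivity) hφ0 hd
  have hqa : n * q ^ a ≤ 1 :=
    hq ▸ mul_div_rpow_one_div_pow_le_one (by positivity) hφ0 hd (ha ▸ Nat.le_ceil _)
  have ha1 : 1 ≤ a := Nat.one_le_iff_ne_zero.2 fun h => by
    simp only [h, pow_zero, mul_one] at hqa; linarith
  have hqB : q * B = 12 * Real.log n := by rw [hq]; simp only [B]; field_simp
  have hB : 12 * Real.log n ≤ B := hqB ▸ mul_le_of_le_one_left (by positivity) hq1.le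
  have : Nonempty (Fin nhat) := ⟨⟨0, hnhat1⟩⟩
  refine one_sub_le_measure_of_measure_compl_le ?_
  rcases lt_or_ge n 16 with hsmall | hlarge
  · refine (measure_compl_exists_level_eq_zero hmeas hgeom hq0.le hq1 ha1 ?_).trans_le zero_le
    have : (nhat : ℝ) ≤ 15 := by exact_mod_cast (by omega : nhat ≤ 15)
    rw [Fintype.card_fin]
    linarith [fifteen_lt_twelve_mul_log hn']
  · have hd1 := mul_add_logb_lt_logb (c := 1) (by norm_num; exact_mod_cast hlarge) hφ0 hφ2
    refine (measure_compl_exists_sparse_level_le hind hmeas hgeom hq0.le hq1 ha1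
      (by linarith [Real.log_natCast_nonneg n])).trans (ENNReal.ofReal_le_ofReal ?_)
    exact sparse_level_error_le (by omega) (by simpa using hnhat2) hq0 hq1.le ha1 hqa
      (ha ▸ ceil_sub_one_le_logb hφ1 (by simpa using hd1))
      (hqB ▸ by push_cast; gcongr; exact (Nat.lt_floor_add_one B).le)
end

section
/- Let n ≥ 1 and let G₁, …, Gₙ be independent random variables with P(G_i = t) = 2^{−t} for every integer t ≥ 1 (geometric with parameter 1/2). Then the probability that there exists an integer t ≥ 1 attained by exactly one of the variables (i.e., exactly one index i satisfies G_i = t) is at least 2/3. (Theorem 2, part 1, of the paper: when n neighbors of a station v execute Green-Decay(∞), this event is exactly the event that v receives the message.) -/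
/-!
The event in question contains the event that the maximum of the `Gᵢ` is attained exactly once.
By independence, the maximum equals `t + 1` and is attained only by `Gᵢ` with probability
`2^-(t+1) (1 - 2^-t)^(n-1)`, so that event has probability
`q n = ∑ₜ n 2^-(t+1) (1 - 2^-t)^(n-1)` (`uniqueMaxProb n`). Conditioning on which of the
variables exceed `1` (and shifting those down by one) gives `2ⁿ q n = ∑ₖ (n choose k) q k` for
`n ≥ 2`; as `q 0 = 0` and `q 1 = 1`, strong induction on this recursion gives `q n ≥ 2/3`.
-/

open Finset Function MeasureTheory ProbabilityTheory
open scoped ENNReal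

theorem sum_range_choose_mul_mul_pow_pred {R : Type*} [CommSemiring R] (x : R) (n : ℕ) :
    ∑ k ∈ range (n + 1), (n.choose k : R) * (k * x ^ (k - 1)) = n * (1 + x) ^ (n - 1) := by
  cases n with
  | zero => simp
  | succ m =>
    rw [sum_range_succ', Nat.add_sub_cancel, add_comm 1 x, add_pow, mul_sum]
    simp only [Nat.cast_zero, zero_mul, mul_zero, add_zero, Nat.add_sub_cancel, one_pow, mul_one]
    refine sum_congr rfl fun k _ => ?_
    have h := congrArg (Nat.cast (R := R)) (Nat.add_one_mul_choose_eq m k)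
    push_cast at h ⊢
    rw [← mul_assoc, ← h]
    ring

theorem two_thirds_le_of_binomial_recursion {K : Type*} [Field K] [LinearOrder K]
    [IsStrictOrderedRing K] (x : ℕ → K) (h₀ : x 0 = 0) (h₁ : x 1 = 1)
    (hrec : ∀ n, 2 ≤ n → ∑ k ∈ range (n + 1), (n.choose k : K) * x k = 2 ^ n * x n) :
    ∀ n, 1 ≤ n → 2 / 3 ≤ x n := by
  intro n hn
  induction n using Nat.strong_induction_on with
  | _ n ih =>
  obtain rfl | ⟨m, rfl⟩ : n = 1 ∨ ∃ m, n = m + 2 := by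
    rcases n with _ | _ | m <;> simp_all
  · norm_num [h₁]
  have hmid : 0 ≤ ∑ k ∈ range m, ((m + 2).choose (k + 1 + 1) : K) * (x (k + 1 + 1) - 2 / 3) :=
    sum_nonneg fun k hk => mul_nonneg (Nat.cast_nonneg _)
      (sub_nonneg.2 (ih _ (by have := mem_range.1 hk; omega) (by omega)))
  have hsplit : ∑ k ∈ range (m + 2 + 1), ((m + 2).choose k : K) * (x k - 2 / 3) =
      2 ^ (m + 2) * x (m + 2) - 2 / 3 * 2 ^ (m + 2) := by
    simp only [mul_sub, sum_sub_distrib, hrec _ le_add_self, ← sum_mul]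
    rw [← Nat.cast_sum, Nat.sum_range_choose]
    push_cast; ring
  rw [sum_range_succ, sum_range_succ', sum_range_succ'] at hsplit
  simp only [zero_add, Nat.choose_self, Nat.choose_one_right, Nat.choose_zero_right, h₀, h₁]
    at hsplit
  have hpow : (4 : K) ≤ 2 ^ (m + 2) := by
    rw [pow_add]; norm_num; exact one_le_pow₀ one_le_two
  push_cast at hsplit
  -- That is, `(2 ^ n - 1) * (x n - 2 / 3) = (n - 2) / 3 + (the sum in hmid)` for `n = m + 2`.
  nlinarith

theorem ENNReal.tsum_inv_two_pow_add_succ (t : ℕ) :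
    ∑' s : ℕ, (2⁻¹ : ℝ≥0∞) ^ (t + (s + 1)) = 2⁻¹ ^ t := by
  simp_rw [pow_add (2⁻¹ : ℝ≥0∞) t, ENNReal.tsum_mul_left, ENNReal.tsum_geometric_add_one,
    ENNReal.one_sub_inv_two, inv_inv, ENNReal.inv_mul_cancel two_ne_zero ENNReal.ofNat_ne_top,
    mul_one]

theorem ENNReal.two_mul_inv_two_pow_succ (t : ℕ) : (2 : ℝ≥0∞) * 2⁻¹ ^ (t + 1) = 2⁻¹ ^ t := by
  rw [pow_succ, mul_left_comm, ENNReal.mul_inv_cancel two_ne_zero ENNReal.ofNat_ne_top, mul_one]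

noncomputable def geomCdf (t : ℕ) : ℝ≥0∞ := 1 - 2⁻¹ ^ t

theorem one_add_geomCdf (t : ℕ) : 1 + geomCdf t = 2 * geomCdf (t + 1) := by
  rw [geomCdf, geomCdf, ENNReal.mul_sub (fun _ _ => ENNReal.ofNat_ne_top), mul_one,
    ENNReal.two_mul_inv_two_pow_succ, add_comm, ENNReal.sub_add_eq_add_sub
      (pow_le_one₀ zero_le (by simp)) (by simp), one_add_one_eq_two]

noncomputable def uniqueMaxTerm (n t : ℕ) : ℝ≥0∞ := n * (2⁻¹ ^ (t + 1) * geomCdf t ^ (n - 1))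

noncomputable def uniqueMaxProb (n : ℕ) : ℝ≥0∞ := ∑' t, uniqueMaxTerm n t

theorem sum_choose_mul_uniqueMaxTerm (n t : ℕ) :
    ∑ k ∈ range (n + 1), (n.choose k : ℝ≥0∞) * uniqueMaxTerm k t =
      2 ^ n * uniqueMaxTerm n (t + 1) := by
  simp_rw [uniqueMaxTerm, mul_left_comm (_ : ℝ≥0∞) (2⁻¹ ^ (t + 1)), ← mul_sum,
    sum_range_choose_mul_mul_pow_pred, one_add_geomCdf]
  rcases n with _ | m
  · simp
  · rw [← ENNReal.two_mul_inv_two_pow_succ (t + 1), Nat.add_sub_cancel]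
    ring

theorem uniqueMaxProb_zero : uniqueMaxProb 0 = 0 := by simp [uniqueMaxProb, uniqueMaxTerm]

theorem uniqueMaxProb_one : uniqueMaxProb 1 = 1 := by
  simpa [uniqueMaxProb, uniqueMaxTerm] using ENNReal.tsum_inv_two_pow_add_succ 0

theorem uniqueMaxProb_ne_top (n : ℕ) : uniqueMaxProb n ≠ ∞ := by
  refine ne_top_of_le_ne_top (ENNReal.natCast_ne_top n) ?_
  calc uniqueMaxProb n ≤ ∑' t : ℕ, n * (2⁻¹ : ℝ≥0∞) ^ (0 + (t + 1)) :=
        ENNReal.tsum_le_tsum fun t => by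
          rw [zero_add, uniqueMaxTerm]
          gcongr
          exact mul_le_of_le_one_right zero_le (pow_le_one₀ zero_le tsub_le_self)
    _ = n := by rw [ENNReal.tsum_mul_left, ENNReal.tsum_inv_two_pow_add_succ, pow_zero, mul_one]

theorem sum_choose_mul_uniqueMaxProb {n : ℕ} (hn : 2 ≤ n) :
    ∑ k ∈ range (n + 1), (n.choose k : ℝ≥0∞) * uniqueMaxProb k = 2 ^ n * uniqueMaxProb n := by
  have hzero : uniqueMaxTerm n 0 = 0 := by
    simp [uniqueMaxTerm, geomCdf, zero_pow (by omega : n - 1 ≠ 0)]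
  simp_rw [uniqueMaxProb, ← ENNReal.tsum_mul_left]
  rw [← Summable.tsum_finsetSum fun _ _ => ENNReal.summable]
  conv_rhs => rw [tsum_eq_zero_add' ENNReal.summable]
  simp [sum_choose_mul_uniqueMaxTerm, hzero]

theorem two_thirds_le_uniqueMaxProb {n : ℕ} (hn : 1 ≤ n) : 2 / 3 ≤ uniqueMaxProb n := by
  have hrec (m : ℕ) (hm : 2 ≤ m) :
      ∑ k ∈ range (m + 1), (m.choose k : ℝ) * (uniqueMaxProb k).toReal =
        2 ^ m * (uniqueMaxProb m).toReal := by
    have h := congrArg ENNReal.toReal (sum_choose_mul_uniqueMaxProb hm)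
    rw [ENNReal.toReal_sum fun k _ => ENNReal.mul_ne_top (by simp) (uniqueMaxProb_ne_top k)] at h
    simpa using h
  have hreal := two_thirds_le_of_binomial_recursion (fun k => (uniqueMaxProb k).toReal)
    (by simp [uniqueMaxProb_zero]) (by simp [uniqueMaxProb_one]) hrec n hn
  rwa [← ENNReal.toReal_le_toReal (by finiteness) (uniqueMaxProb_ne_top n), ENNReal.toReal_div]

section UniqueMax

variable {Ω ι : Type*} {G : ι → Ω → ℕ}

def uniqueMaxAt (G : ι → Ω → ℕ) (t : ℕ) (i : ι) : Set Ω :=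
  {ω | G i ω = t + 1 ∧ ∀ j ≠ i, G j ω ≤ t}

theorem pairwise_disjoint_uniqueMaxAt :
    Pairwise (Disjoint on fun p : ℕ × ι => uniqueMaxAt G p.1 p.2) := by
  rintro ⟨t, i⟩ ⟨t', i'⟩ hne
  refine Set.disjoint_left.2 fun ω ⟨hi, hothers⟩ ⟨hi', hothers'⟩ => ?_
  by_cases h : i = i'
  · subst h
    exact hne (Prod.ext (by simp only at hi hi' ⊢; omega) rfl)
  · have := hothers i' (Ne.symm h)
    have := hothers' i h
    simp only at *
    omega

theorem iUnion_uniqueMaxAt_subset :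
    ⋃ p : ℕ × ι, uniqueMaxAt G p.1 p.2 ⊆ {ω | ∃ t, 1 ≤ t ∧ ∃! i, G i ω = t} :=
  Set.iUnion_subset fun ⟨t, i⟩ ω ⟨hi, hothers⟩ =>
    ⟨t + 1, by omega, i, hi, fun j hj => by_contra fun hne => by have := hothers j hne; omega⟩

variable [MeasurableSpace Ω]

theorem measurableSet_uniqueMaxAt [Countable ι] (hmeas : ∀ i, Measurable (G i)) (t : ℕ) (i : ι) :
    MeasurableSet (uniqueMaxAt G t i) := by
  simp only [uniqueMaxAt, Set.ofPred_and, Set.ofPred_forall]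
  exact (hmeas i (measurableSet_singleton _)).inter
    (.iInter fun j => .iInter fun _ => hmeas j measurableSet_Iic)

end UniqueMax

section Geometric

variable {Ω : Type*} [MeasurableSpace Ω] {μ : Measure Ω}

theorem measure_lt_eq_inv_two_pow {X : Ω → ℕ} (hX : Measurable X)
    (hgeom : ∀ t, 1 ≤ t → μ {ω | X ω = t} = 2⁻¹ ^ t) (t : ℕ) :
    μ {ω | t < X ω} = 2⁻¹ ^ t := by
  have hunion : {ω | t < X ω} = ⋃ s : ℕ, {ω | X ω = t + (s + 1)} := by
    ext ω
    simp only [Set.mem_ofPred_eq, Set.mem_iUnion]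
    exact ⟨fun h => ⟨X ω - t - 1, by omega⟩, fun ⟨s, hs⟩ => by omega⟩
  have hdisj : Pairwise (Disjoint on fun s : ℕ => {ω | X ω = t + (s + 1)}) :=
    fun s s' hne => Set.disjoint_left.2 fun ω hs hs' => hne (by
      simp only [Set.mem_ofPred_eq] at hs hs'; omega)
  rw [hunion, measure_iUnion hdisj fun s => hX (measurableSet_singleton _)]
  exact (tsum_congr fun s => hgeom _ (by omega)).trans (ENNReal.tsum_inv_two_pow_add_succ t)

theorem measure_le_eq_geomCdf [IsProbabilityMeasure μ] {X : Ω → ℕ} (hX : Measurable X)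
    (hgeom : ∀ t, 1 ≤ t → μ {ω | X ω = t} = 2⁻¹ ^ t) (t : ℕ) :
    μ {ω | X ω ≤ t} = geomCdf t := by
  have hcompl : {ω | X ω ≤ t} = {ω | t < X ω}ᶜ := by ext; simp
  rw [hcompl, prob_compl_eq_one_sub (measurableSet_lt measurable_const hX),
    measure_lt_eq_inv_two_pow hX hgeom, geomCdf]

variable {ι : Type*} [Fintype ι] [IsProbabilityMeasure μ] {G : ι → Ω → ℕ}
  (hmeas : ∀ i, Measurable (G i)) (hind : iIndepFun G μ)
  (hgeom : ∀ i t, 1 ≤ t → μ {ω | G i ω = t} = 2⁻¹ ^ t)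
include hmeas hind hgeom

theorem measure_uniqueMaxAt (t : ℕ) (i : ι) :
    μ (uniqueMaxAt G t i) = 2⁻¹ ^ (t + 1) * geomCdf t ^ (Fintype.card ι - 1) := by
  classical
  have hinter : uniqueMaxAt G t i =
      ⋂ j ∈ univ, G j ⁻¹' (if j = i then {t + 1} else Set.Iic t) := by
    ext ω
    simp only [uniqueMaxAt, Set.mem_ofPred_eq, Set.mem_iInter, mem_univ, true_implies]
    refine ⟨fun ⟨hi, hothers⟩ j => ?_,
      fun h => ⟨by simpa using h i, fun j hj => by simpa [hj] using h j⟩⟩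
    by_cases hj : j = i
    · simp [hj, hi]
    · simp [hj, hothers j hj]
  have hfactor : ∀ j ∈ univ.erase i,
      μ (G j ⁻¹' (if j = i then {t + 1} else Set.Iic t)) = geomCdf t := fun j hj => by
    rw [if_neg (ne_of_mem_erase hj)]
    exact measure_le_eq_geomCdf (hmeas j) (hgeom j) t
  rw [hinter, hind.measure_inter_preimage_eq_mul univ fun _ _ => .of_discrete,
    ← mul_prod_erase univ _ (mem_univ i), if_pos rfl, prod_congr rfl hfactor, prod_const,
    card_erase_of_mem (mem_univ i), card_univ]
  exact congrArg (· * _) (hgeom i (t + 1) le_add_self)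

theorem measure_iUnion_uniqueMaxAt :
    μ (⋃ p : ℕ × ι, uniqueMaxAt G p.1 p.2) = uniqueMaxProb (Fintype.card ι) := by
  rw [measure_iUnion pairwise_disjoint_uniqueMaxAt
      fun p => measurableSet_uniqueMaxAt hmeas p.1 p.2,
    ENNReal.tsum_prod (f := fun t i => μ (uniqueMaxAt G t i)), uniqueMaxProb]
  congr 1 with t
  simp [tsum_fintype, measure_uniqueMaxAt hmeas hind hgeom, uniqueMaxTerm]

end Geometric

/-- Theorem 2, part 1: if `G₁, …, Gₙ` (`n ≥ 1`) are independent
geometric random variables with parameter `1/2` (`P(Gᵢ = t) = 2^(−t)` for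
integers `t ≥ 1`), then with probability at least `2/3` some integer `t ≥ 1`
is attained by exactly one of the variables. -/
theorem green_decay_infinite (n : ℕ) (hn : 1 ≤ n)
    (Ω : Type*) [MeasurableSpace Ω] (μ : Measure Ω) [IsProbabilityMeasure μ]
    (G : Fin n → Ω → ℕ) (hmeas : ∀ i, Measurable (G i))
    (hind : iIndepFun G μ)
    (hgeom : ∀ (i : Fin n) (t : ℕ), 1 ≤ t →
      μ {ω | G i ω = t} = (2 : ENNReal)⁻¹ ^ t) :
    2 / 3 ≤ μ {ω | ∃ t : ℕ, 1 ≤ t ∧ ∃! i : Fin n, G i ω = t} :=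
  calc 2 / 3 ≤ uniqueMaxProb n := two_thirds_le_uniqueMaxProb hn
    _ = μ (⋃ p : ℕ × Fin n, uniqueMaxAt G p.1 p.2) := by
      rw [measure_iUnion_uniqueMaxAt hmeas hind hgeom, Fintype.card_fin]
    _ ≤ μ {ω | ∃ t : ℕ, 1 ≤ t ∧ ∃! i : Fin n, G i ω = t} := measure_mono iUnion_uniqueMaxAt_subset
end

section
/- Let n ≥ 2 and let G₁, …, Gₙ be independent random variables with P(G_i = t) = 2^{−t} for every integer t ≥ 1 (geometric with parameter 1/2). Then for every integer k ≥ 2·log n, the probability that there exists an integer t with 1 ≤ t ≤ k attained by exactly one of the variables (i.e., exactly one index i satisfies G_i = t) is strictly greater than 1/2. (Theorem 2, part 2, of the paper: when n neighbors of a station v execute Green-Decay(k), this event is exactly the event that v receives the message.) -/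
/-!
Let `f m j` (`greenDecayFailProb`) be the probability that `m` independent geometric(1/2)
variables leave no level `t ∈ [1, j]` hit by exactly one of them. Each variable hits level 1
with probability 1/2, and by memorylessness the `c` variables above level 1, shifted down by one,
are again independent geometric variables. Hence `f m (j + 1) = ∑_{c ≠ m - 1} C(m, c) f c j / 2^m`,
with `f 0 j = 1` and `f 1 j = 2⁻ʲ`. By induction on `j ≥ 1`, `f m j ≤ 1/3 + m² 2⁻ʲ / 9` for
`m ≥ 2`: inserting this bound and the exact values for `c ≤ 1` into the recursion, the binomial
moments `∑ C(m, c) = 2^m` and `∑ C(m, c) c² = m (m + 1) 2^m / 4` reproduce it at `j + 1`.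
When `2^k ≥ n²` the failure probability is thus at most `4/9 < 1/2`.

The recursion is proved on finite level patterns, recording each variable `G` as
`min G (k + 1)`; shifting a pattern down one level is a bijection onto the patterns of the
variables above level 1.
-/

open Finset MeasureTheory ProbabilityTheory

lemma sum_range_choose_mul_natCast (m : ℕ) :
    ∑ c ∈ range (m + 1), (m.choose c : ℝ) * c = m * 2 ^ m / 2 := by
  induction m with
  | zero => simp
  | succ m ih =>
    rw [sum_choose_succ_mul (fun i _ => (i : ℝ)) m]
    simp only [Nat.cast_add, Nat.cast_one, mul_add, mul_one, sum_add_distrib, ih]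
    rw [← Nat.cast_sum, Nat.sum_range_choose]
    push_cast; ring

lemma sum_range_choose_mul_natCast_sq (m : ℕ) :
    ∑ c ∈ range (m + 1), (m.choose c : ℝ) * c ^ 2 = m * (m + 1) * 2 ^ m / 4 := by
  induction m with
  | zero => simp
  | succ m ih =>
    rw [sum_choose_succ_mul (fun i _ => (i : ℝ) ^ 2) m]
    simp only [Nat.cast_add, Nat.cast_one, add_sq, mul_add, mul_one, one_pow, sum_add_distrib,
      ih]
    simp only [mul_comm (2 : ℝ), ← mul_assoc, ← sum_mul, sum_range_choose_mul_natCast]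
    rw [← Nat.cast_sum, Nat.sum_range_choose]
    push_cast; ring

lemma sum_range_succ_ite_eq_sub {M : Type*} [AddCommGroup M] (a : ℕ → M) {m : ℕ} (hm : 1 ≤ m) :
    ∑ c ∈ range (m + 1), (if c + 1 = m then 0 else a c) =
      ∑ c ∈ range (m + 1), a c - a (m - 1) := by
  have hmem : m - 1 ∈ range (m + 1) := mem_range.2 (by omega)
  rw [← add_sum_erase _ _ hmem, ← add_sum_erase _ _ hmem, if_pos (by omega),
    sum_congr rfl fun c hc => if_neg fun h => (mem_erase.1 hc).1 (by omega)]
  abel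

noncomputable def greenDecayFailProb : ℕ → ℕ → ℝ
  | _, 0 => 1
  | m, j + 1 => ∑ c ∈ range (m + 1),
      if c + 1 = m then 0 else m.choose c * greenDecayFailProb c j / 2 ^ m

lemma greenDecayFailProb_zero_left (j : ℕ) : greenDecayFailProb 0 j = 1 := by
  induction j <;> simp [greenDecayFailProb, *]

lemma greenDecayFailProb_one_left (j : ℕ) : greenDecayFailProb 1 j = 2⁻¹ ^ j := by
  induction j with
  | zero => simp [greenDecayFailProb]
  | succ j ih => simp [greenDecayFailProb, sum_range_succ, ih, pow_succ, div_eq_mul_inv]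

/- `1 / 3 = P(G₁ = G₂)` is the failure probability of two participants as `j → ∞`. -/
noncomputable def decayBound (x : ℝ) : ℕ → ℝ
  | 0 => 1
  | 1 => x
  | m + 2 => 1 / 3 + ((m + 2 : ℕ) : ℝ) ^ 2 * x / 9

lemma sum_range_choose_mul_decayBound (x : ℝ) (m : ℕ) :
    ∑ c ∈ range (m + 3), ((m + 2).choose c : ℝ) * decayBound x c =
      2 ^ (m + 2) / 3 + x * (m + 2) * (m + 3) * 2 ^ (m + 2) / 36 + 2 / 3 +
        (m + 2) * (8 * x / 9 - 1 / 3) := by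
  have hsmooth : ∑ c ∈ range (m + 3), ((m + 2).choose c : ℝ) * (1 / 3 + (c : ℝ) ^ 2 * x / 9) =
      2 ^ (m + 2) / 3 + x * (m + 2) * (m + 3) * 2 ^ (m + 2) / 36 := by
    calc _ = (∑ c ∈ range (m + 3), ((m + 2).choose c : ℝ)) / 3 +
          (∑ c ∈ range (m + 3), ((m + 2).choose c : ℝ) * c ^ 2) * x / 9 := by
          rw [sum_div, sum_mul, sum_div, ← sum_add_distrib]
          exact sum_congr rfl fun c _ => by ring
      _ = _ := by
          rw [← Nat.cast_sum, Nat.sum_range_choose, sum_range_choose_mul_natCast_sq]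
          push_cast; ring
  have hcorr : ∑ c ∈ range (m + 3), ((m + 2).choose c : ℝ) *
      (decayBound x c - (1 / 3 + (c : ℝ) ^ 2 * x / 9)) =
        2 / 3 + (m + 2) * (8 * x / 9 - 1 / 3) := by
    rw [sum_range_succ', sum_range_succ',
      sum_eq_zero fun i _ => by simp only [decayBound]; ring]
    simp [decayBound]
    ring
  calc _ = ∑ c ∈ range (m + 3), ((m + 2).choose c : ℝ) * (1 / 3 + (c : ℝ) ^ 2 * x / 9) +
        ∑ c ∈ range (m + 3), ((m + 2).choose c : ℝ) *
          (decayBound x c - (1 / 3 + (c : ℝ) ^ 2 * x / 9)) := by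
        rw [← sum_add_distrib]; exact sum_congr rfl fun c _ => by ring
    _ = _ := by rw [hsmooth, hcorr]; ring

lemma sum_range_ite_choose_mul_decayBound_le {x : ℝ} (hx : 0 ≤ x) (m : ℕ) :
    ∑ c ∈ range (m + 3),
        (if c + 1 = m + 2 then 0 else (m + 2).choose c * decayBound x c / 2 ^ (m + 2)) ≤
      decayBound (x / 2) (m + 2) := by
  rw [sum_range_succ_ite_eq_sub _ (by omega), ← sum_div, show m + 2 - 1 = m + 1 by omega,
    Nat.choose_succ_self_right, ← sub_div, div_le_iff₀ (by positivity)]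
  push_cast
  rw [sum_range_choose_mul_decayBound]
  rcases m with _ | m
  · simp only [decayBound]; norm_num; linarith
  · simp only [decayBound]; push_cast
    have hpow : (8 : ℝ) ≤ 2 ^ (m + 1 + 2) := by
      calc (8 : ℝ) = 2 ^ 3 := by norm_num
        _ ≤ 2 ^ (m + 1 + 2) := pow_le_pow_right₀ (by norm_num) (by omega)
    have hm : (0 : ℝ) ≤ m := m.cast_nonneg
    nlinarith [mul_nonneg (mul_nonneg hx (by linarith : (0 : ℝ) ≤ m + 3))
      (show (0 : ℝ) ≤ (m + 2) * 2 ^ (m + 1 + 2) - 4 * (8 - (m + 2) ^ 2) by nlinarith)]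

lemma greenDecayFailProb_succ_le {j : ℕ} {x : ℝ} (hx : 0 ≤ x)
    (h : ∀ c, greenDecayFailProb c j ≤ decayBound x c) (m : ℕ) :
    greenDecayFailProb m (j + 1) ≤ decayBound (x / 2) m := by
  match m with
  | 0 => simp [greenDecayFailProb_zero_left, decayBound]
  | 1 =>
    have h1 := h 1
    simp only [greenDecayFailProb_one_left, decayBound] at h1 ⊢
    rw [pow_succ]; linarith
  | m + 2 =>
    refine (sum_le_sum fun c _ => ?_).trans (sum_range_ite_choose_mul_decayBound_le hx m)
    split_ifs
    · rfl
    · gcongr; exact h c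

lemma greenDecayFailProb_one_right_le (m : ℕ) :
    greenDecayFailProb m 1 ≤ decayBound 2⁻¹ m := by
  match m with
  | 0 => simp [greenDecayFailProb_zero_left, decayBound]
  | 1 => simp [greenDecayFailProb_one_left, decayBound]
  | m + 2 =>
    calc greenDecayFailProb (m + 2) 1 = (2 ^ (m + 2) - (m + 2)) / 2 ^ (m + 2) := by
          simp only [greenDecayFailProb, mul_one]
          rw [sum_range_succ_ite_eq_sub _ (by omega), ← sum_div, ← Nat.cast_sum,
            Nat.sum_range_choose, show m + 2 - 1 = m + 1 by omega, Nat.choose_succ_self_right,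
            sub_div]
          push_cast; ring
      _ ≤ decayBound 2⁻¹ (m + 2) := by
          simp only [decayBound]
          rw [div_le_iff₀ (by positivity)]
          push_cast
          rcases m with _ | _ | m
          · norm_num
          · norm_num
          · push_cast
            have hm : (0 : ℝ) ≤ m := m.cast_nonneg
            nlinarith [mul_nonneg (pow_pos (two_pos (α := ℝ)) (m + 1 + 1 + 2)).le
              (show (0 : ℝ) ≤ (m + 1 + 1 + 2) ^ 2 * 2⁻¹ / 9 - 2 / 3 by nlinarith)]

lemma greenDecayFailProb_le_decayBound {j : ℕ} (hj : 1 ≤ j) (m : ℕ) :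
    greenDecayFailProb m j ≤ decayBound (2⁻¹ ^ j) m := by
  induction j, hj using Nat.le_induction generalizing m with
  | base => simpa using greenDecayFailProb_one_right_le m
  | succ j _ ih =>
    rw [pow_succ, ← div_eq_mul_inv]
    exact greenDecayFailProb_succ_le (by positivity) ih m

lemma greenDecayFailProb_le {m j : ℕ} (hm : 2 ≤ m) (hj : 1 ≤ j) :
    greenDecayFailProb m j ≤ 1 / 3 + m ^ 2 * 2⁻¹ ^ j / 9 := by
  obtain ⟨m, rfl⟩ := Nat.exists_eq_add_of_le' hm
  exact greenDecayFailProb_le_decayBound hj (m + 2)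

section Patterns

variable {ι : Type*}

def HasSingletonLevel (j : ℕ) (w : ι → ℕ) : Prop :=
  ∃ t, 1 ≤ t ∧ t ≤ j ∧ ∃! i, w i = t

lemma hasSingletonLevel_succ {j : ℕ} {w : ι → ℕ} :
    HasSingletonLevel (j + 1) w ↔ (∃! i, w i = 1) ∨ HasSingletonLevel j fun i => w i - 1 := by
  constructor
  · rintro ⟨t, ht1, htj, hu⟩
    rcases eq_or_lt_of_le ht1 with rfl | ht
    · exact .inl hu
    · exact .inr ⟨t - 1, by omega, by omega,
        (existsUnique_congr fun i => by dsimp only; omega).1 hu⟩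
  · rintro (hu | ⟨t, ht1, htj, hu⟩)
    · exact ⟨1, le_rfl, by omega, hu⟩
    · exact ⟨t + 1, by omega, by omega, (existsUnique_congr fun i => by dsimp only; omega).1 hu⟩

lemma hasSingletonLevel_min_iff {j : ℕ} {w : ι → ℕ} :
    HasSingletonLevel j (fun i => min (w i) (j + 1)) ↔ HasSingletonLevel j w :=
  exists_congr fun t => and_congr_right fun _ => and_congr_right fun htj =>
    existsUnique_congr fun i => by dsimp only; omega

variable [Fintype ι] [DecidableEq ι]

/- A pattern records the level `min (G i) (j + 1)` of each variable of `s`, so that `j + 1`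
stands for every level beyond `j`; the value `0` marks the indices outside `s`. -/
def levelPatterns (s : Finset ι) (j : ℕ) : Finset (ι → ℕ) :=
  {w ∈ Fintype.piFinset fun _ => range (j + 2) | ∀ i, w i ≠ 0 ↔ i ∈ s}

open Classical in
noncomputable def failPatterns (s : Finset ι) (j : ℕ) : Finset (ι → ℕ) :=
  {w ∈ levelPatterns s j | ¬ HasSingletonLevel j w}

lemma mem_failPatterns {s : Finset ι} {j : ℕ} {w : ι → ℕ} :
    w ∈ failPatterns s j ↔
      (∀ i, w i ≤ j + 1) ∧ (∀ i, w i ≠ 0 ↔ i ∈ s) ∧ ¬ HasSingletonLevel j w := by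
  simp only [failPatterns, levelPatterns, mem_filter, Fintype.mem_piFinset, mem_range,
    Nat.lt_succ_iff, and_assoc]

/- For `1 ≤ t ≤ j + 1` this is the probability that `min G (j + 1) = t`; `levelWeight j 0 = 1`
makes the indices outside `s` contribute nothing to a product over all indices. -/
noncomputable def levelWeight (j t : ℕ) : ℝ := 2⁻¹ ^ min t j

lemma levelWeight_nonneg (j t : ℕ) : 0 ≤ levelWeight j t := by
  unfold levelWeight; positivity

noncomputable def failWeight (s : Finset ι) (j : ℕ) : ℝ :=
  ∑ w ∈ failPatterns s j, ∏ i, levelWeight j (w i)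

lemma failWeight_zero (s : Finset ι) : failWeight s 0 = 1 := by
  have hpat : failPatterns s 0 = {fun i => if i ∈ s then 1 else 0} := by
    ext w
    simp only [mem_failPatterns, mem_singleton, HasSingletonLevel, funext_iff]
    refine ⟨fun ⟨hle, hs, _⟩ i => ?_, fun hw => ⟨fun i => ?_, fun i => ?_, ?_⟩⟩
    · have hle := hle i
      have hs := hs i
      split_ifs with h <;> simp only [h, iff_true, iff_false, not_not] at hs <;> omega
    · rw [hw i]; split_ifs <;> norm_num
    · rw [hw i]; split_ifs <;> simp [*]
    · rintro ⟨t, ht1, ht0, -⟩; omega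
  simp [failWeight, hpat, levelWeight]

lemma prod_levelWeight_succ {s : Finset ι} {w : ι → ℕ} (hw : ∀ i, w i ≠ 0 ↔ i ∈ s) (j : ℕ) :
    ∏ i, levelWeight (j + 1) (w i) = (∏ i, levelWeight j (w i - 1)) / 2 ^ #s := by
  have hfactor : ∀ i, levelWeight (j + 1) (w i) =
      levelWeight j (w i - 1) * if i ∈ s then 2⁻¹ else 1 := by
    intro i
    have hi := hw i
    by_cases h : i ∈ s
    · simp only [h, iff_true] at hi
      rw [if_pos h, levelWeight, levelWeight, ← pow_succ]
      congr 1; omega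
    · simp only [h, iff_false, not_not] at hi
      simp [levelWeight, h, hi]
  rw [prod_congr rfl fun i _ => hfactor i, prod_mul_distrib, prod_ite_mem, univ_inter,
    prod_const, div_eq_mul_inv, inv_pow]

lemma existsUnique_eq_one_iff_card {s : Finset ι} {w : ι → ℕ} (hw : ∀ i, w i ≠ 0 ↔ i ∈ s) :
    (∃! i, w i = 1) ↔ #({i | 1 < w i} : Finset ι) + 1 = #s := by
  have hsub : ({i | 1 < w i} : Finset ι) ⊆ s :=
    fun i hi => (hw i).1 (by rw [mem_filter_univ] at hi; omega)
  have hones : ({i | w i = 1} : Finset ι) = s \ ({i | 1 < w i} : Finset ι) := by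
    ext i; simp only [mem_filter_univ, mem_sdiff, ← hw i]; omega
  rw [Fintype.existsUnique_iff_card_one, hones, card_sdiff_of_subset hsub]
  have := card_le_card hsub
  omega

lemma sub_one_mem_failPatterns {s : Finset ι} {j : ℕ} {w : ι → ℕ}
    (hw : w ∈ failPatterns s (j + 1)) :
    (fun i => w i - 1) ∈ failPatterns {i | 1 < w i} j := by
  obtain ⟨hle, -, hfail⟩ := mem_failPatterns.1 hw
  refine mem_failPatterns.2 ⟨fun i => by have := hle i; omega, fun i => ?_,
    fun h => hfail (hasSingletonLevel_succ.2 (.inr h))⟩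
  rw [mem_filter_univ]; omega

lemma lift_mem_failPatterns {s B : Finset ι} {j : ℕ} {w : ι → ℕ} (hBs : B ⊆ s)
    (hcard : #B + 1 ≠ #s) (hw : w ∈ failPatterns B j) :
    (fun i => if i ∈ s then w i + 1 else 0) ∈ failPatterns s (j + 1) ∧
      ({i | 1 < if i ∈ s then w i + 1 else 0} : Finset ι) = B := by
  obtain ⟨hle, hB, hfail⟩ := mem_failPatterns.1 hw
  have hs : ∀ i, (if i ∈ s then w i + 1 else 0) ≠ 0 ↔ i ∈ s :=
    fun i => by split_ifs <;> simp [*]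
  have hfiber : ({i | 1 < if i ∈ s then w i + 1 else 0} : Finset ι) = B := by
    ext i
    rw [mem_filter_univ, ← hB i]
    split_ifs with hi
    · omega
    · exact ⟨by omega, fun h => (hi (hBs ((hB i).1 h))).elim⟩
  have hshift : (fun i => (if i ∈ s then w i + 1 else 0) - 1) = w := by
    funext i
    by_cases hi : i ∈ s
    · simp [hi]
    · have : w i = 0 := by_contra fun h => hi (hBs ((hB i).1 h))
      simp [hi, this]
  refine ⟨mem_failPatterns.2 ⟨fun i => ?_, hs, fun h => ?_⟩, hfiber⟩
  · have := hle i; split_ifs <;> omega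
  · rcases hasSingletonLevel_succ.1 h with h | h
    · exact hcard (hfiber ▸ (existsUnique_eq_one_iff_card hs).1 h)
    · exact hfail (hshift ▸ h)

lemma sum_fiber_failPatterns {s B : Finset ι} (hBs : B ⊆ s) (j : ℕ) :
    ∑ w ∈ failPatterns s (j + 1) with ({i | 1 < w i} : Finset ι) = B,
        ∏ i, levelWeight (j + 1) (w i) =
      if #B + 1 = #s then 0 else failWeight B j / 2 ^ #s := by
  split_ifs with hcard
  · refine sum_eq_zero fun w hw => ?_
    obtain ⟨hw, hB⟩ := mem_filter.1 hw
    obtain ⟨-, hs, hfail⟩ := mem_failPatterns.1 hw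
    exact (hfail (hasSingletonLevel_succ.2
      (.inl ((existsUnique_eq_one_iff_card hs).2 (hB ▸ hcard))))).elim
  rw [failWeight, sum_div]
  refine sum_nbij' (fun w i => w i - 1) (fun w i => if i ∈ s then w i + 1 else 0)
    (fun w hw => ?_) (fun w hw => mem_filter.2 (lift_mem_failPatterns hBs hcard hw))
    (fun w hw => ?_) (fun w hw => ?_) (fun w hw => ?_)
  · obtain ⟨hw, hB⟩ := mem_filter.1 hw
    exact hB ▸ sub_one_mem_failPatterns hw
  · have hs := (mem_failPatterns.1 (mem_filter.1 hw).1).2.1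
    funext i
    dsimp only
    by_cases hi : i ∈ s
    · rw [if_pos hi]; have := (hs i).2 hi; omega
    · rw [if_neg hi]; have := (hs i).not.2 hi; omega
  · have hB := (mem_failPatterns.1 hw).2.1
    funext i
    dsimp only
    by_cases hi : i ∈ s
    · simp [hi]
    · have : w i = 0 := by_contra fun h => hi (hBs ((hB i).1 h))
      simp [hi, this]
  · exact prod_levelWeight_succ (mem_failPatterns.1 (mem_filter.1 hw).1).2.1 j

lemma failWeight_succ (s : Finset ι) (j : ℕ) :
    failWeight s (j + 1) =
      ∑ B ∈ s.powerset, if #B + 1 = #s then 0 else failWeight B j / 2 ^ #s := by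
  have hmaps : ∀ w ∈ failPatterns s (j + 1), ({i | 1 < w i} : Finset ι) ∈ s.powerset :=
    fun w hw => mem_powerset.2 fun i hi =>
      ((mem_failPatterns.1 hw).2.1 i).1 (by rw [mem_filter_univ] at hi; omega)
  rw [failWeight, ← sum_fiberwise_of_maps_to hmaps]
  exact sum_congr rfl fun B hB => sum_fiber_failPatterns (mem_powerset.1 hB) j

lemma failWeight_eq_greenDecayFailProb (s : Finset ι) (j : ℕ) :
    failWeight s j = greenDecayFailProb #s j := by
  induction j generalizing s with
  | zero => simp [failWeight_zero, greenDecayFailProb]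
  | succ j ih =>
    simp only [failWeight_succ, ih, greenDecayFailProb]
    rw [sum_powerset_apply_card fun c =>
      if c + 1 = #s then 0 else greenDecayFailProb c j / 2 ^ #s]
    refine sum_congr rfl fun c _ => ?_
    split_ifs <;> simp [nsmul_eq_mul, mul_div_assoc]

end Patterns
section Geometric

variable {Ω : Type*} [MeasurableSpace Ω] {μ : Measure Ω} {X : Ω → ℕ}

lemma measure_lt_of_geometric (hX : Measurable X)
    (hgeom : ∀ t, 1 ≤ t → μ {ω | X ω = t} = 2⁻¹ ^ t) (a : ℕ) :
    μ {ω | a < X ω} = 2⁻¹ ^ a := by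
  have hunion : {ω | a < X ω} = ⋃ t : ℕ, {ω | X ω = t + (a + 1)} := by
    ext ω
    simp only [Set.mem_ofPred_eq, Set.mem_iUnion]
    exact ⟨fun h => ⟨X ω - (a + 1), by omega⟩, fun ⟨t, ht⟩ => by omega⟩
  have hdisj : Pairwise (Function.onFun Disjoint fun t : ℕ => {ω | X ω = t + (a + 1)}) :=
    fun t₁ t₂ hne => Set.disjoint_left.2 fun ω h₁ h₂ =>
      hne (by simp only [Set.mem_ofPred_eq] at h₁ h₂; omega)
  rw [hunion, measure_iUnion hdisj fun t => hX (measurableSet_singleton _)]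
  calc ∑' t, μ {ω | X ω = t + (a + 1)} = ∑' t : ℕ, 2⁻¹ ^ (a + 1) * 2⁻¹ ^ t :=
        tsum_congr fun t => by rw [hgeom _ (by omega), pow_add, mul_comm]
    _ = 2⁻¹ ^ a := by
        rw [ENNReal.tsum_mul_left, ENNReal.tsum_geometric, ENNReal.one_sub_inv_two, inv_inv,
          pow_succ, mul_assoc, ENNReal.inv_mul_cancel two_ne_zero ENNReal.ofNat_ne_top, mul_one]

lemma measure_eq_zero_of_geometric [IsProbabilityMeasure μ] (hX : Measurable X)
    (hgeom : ∀ t, 1 ≤ t → μ {ω | X ω = t} = 2⁻¹ ^ t) : μ {ω | X ω = 0} = 0 := by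
  have hpos : {ω | X ω = 0} = {ω | 0 < X ω}ᶜ := by ext; simp
  rw [hpos, prob_compl_eq_zero_iff (measurableSet_lt measurable_const hX),
    measure_lt_of_geometric hX hgeom, pow_zero]

lemma measure_min_eq_levelWeight (hX : Measurable X)
    (hgeom : ∀ t, 1 ≤ t → μ {ω | X ω = t} = 2⁻¹ ^ t) {k t : ℕ} (ht : 1 ≤ t)
    (htk : t ≤ k + 1) :
    μ {ω | min (X ω) (k + 1) = t} = ENNReal.ofReal (levelWeight k t) := by
  rw [levelWeight, ENNReal.ofReal_pow (by norm_num), ENNReal.ofReal_inv_of_pos two_pos,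
    ENNReal.ofReal_ofNat]
  rcases lt_or_eq_of_le htk with htk | rfl
  · rw [min_eq_left (by omega), ← hgeom t ht]
    congr 1; ext ω; simp only [Set.mem_ofPred_eq]; omega
  · rw [min_eq_right (by omega), ← measure_lt_of_geometric hX hgeom k]
    congr 1; ext ω; simp only [Set.mem_ofPred_eq]; omega

lemma measure_not_hasSingletonLevel_le_failWeight {ι : Type*} [Fintype ι] [DecidableEq ι]
    [IsProbabilityMeasure μ] {G : ι → Ω → ℕ} (hmeas : ∀ i, Measurable (G i))
    (hind : iIndepFun G μ) (hgeom : ∀ i t, 1 ≤ t → μ {ω | G i ω = t} = 2⁻¹ ^ t) (k : ℕ) :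
    μ {ω | ¬ HasSingletonLevel k fun i => G i ω} ≤
      ENNReal.ofReal (failWeight (univ : Finset ι) k) := by
  set clamp : Ω → ι → ℕ := fun ω i => min (G i ω) (k + 1)
  have hcover : {ω | ¬ HasSingletonLevel k fun i => G i ω} ⊆
      (⋃ i, {ω | G i ω = 0}) ∪ ⋃ w ∈ failPatterns univ k, {ω | clamp ω = w} := by
    intro ω hω
    by_cases h0 : ∃ i, G i ω = 0
    · exact Or.inl (Set.mem_iUnion.2 h0)
    rw [not_exists] at h0
    refine Or.inr (Set.mem_biUnion (mem_failPatterns.2 ⟨fun i => min_le_right _ _,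
      fun i => ?_, hasSingletonLevel_min_iff.not.2 hω⟩) rfl)
    simp [h0 i]
  have hclamp : ∀ w ∈ failPatterns univ k,
      μ {ω | clamp ω = w} = ENNReal.ofReal (∏ i, levelWeight k (w i)) := by
    intro w hw
    obtain ⟨hle, hs, -⟩ := mem_failPatterns.1 hw
    have hinter : {ω | clamp ω = w} =
        ⋂ i ∈ (univ : Finset ι), G i ⁻¹' {x | min x (k + 1) = w i} := by
      ext ω; simp [clamp, funext_iff]
    rw [hinter, hind.measure_inter_preimage_eq_mul _ fun i _ => MeasurableSet.of_discrete,
      ENNReal.ofReal_prod_of_nonneg fun i _ => levelWeight_nonneg _ _]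
    exact prod_congr rfl fun i _ => measure_min_eq_levelWeight (hmeas i) (hgeom i)
      (Nat.one_le_iff_ne_zero.2 ((hs i).2 (mem_univ i))) (hle i)
  calc _ ≤ μ (⋃ i, {ω | G i ω = 0}) + μ (⋃ w ∈ failPatterns univ k, {ω | clamp ω = w}) :=
        (measure_mono hcover).trans (measure_union_le _ _)
    _ ≤ 0 + ∑ w ∈ failPatterns univ k, μ {ω | clamp ω = w} :=
        add_le_add
          (measure_iUnion_null fun i => measure_eq_zero_of_geometric (hmeas i) (hgeom i)).le
          (measure_biUnion_finset_le _ _)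
    _ = ENNReal.ofReal (failWeight univ k) := by
        rw [zero_add, sum_congr rfl hclamp, failWeight,
          ENNReal.ofReal_sum_of_nonneg fun w _ => prod_nonneg fun i _ => levelWeight_nonneg _ _]

lemma half_lt_measure_of_measure_compl_lt [IsProbabilityMeasure μ] {s : Set Ω}
    (h : μ sᶜ < 1 / 2) : 1 / 2 < μ s := by
  by_contra hle
  rw [not_lt] at hle
  have hlt := calc (1 : ENNReal) = μ (s ∪ sᶜ) := by rw [Set.union_compl_self, measure_univ]
    _ ≤ μ s + μ sᶜ := measure_union_le _ _
    _ < 1 / 2 + 1 / 2 := ENNReal.add_lt_add_of_le_of_lt (by norm_num) hle h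
    _ = 1 := ENNReal.add_halves 1
  exact lt_irrefl _ hlt

end Geometric

lemma sq_le_two_pow_of_two_mul_logb_le {x : ℝ} (hx : 0 < x) {k : ℕ}
    (hk : 2 * Real.logb 2 x ≤ k) : x ^ 2 ≤ 2 ^ k := by
  have hlog : Real.logb 2 (x ^ 2) ≤ k := by rw [Real.logb_pow]; push_cast; linarith
  simpa [Real.rpow_natCast] using (Real.logb_le_iff_le_rpow one_lt_two (by positivity)).1 hlog

/-- Theorem 2, part 2: if `G₁, …, Gₙ` (`n ≥ 2`) are independent
geometric random variables with parameter `1/2` (`P(Gᵢ = t) = 2^(−t)` for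
integers `t ≥ 1`), then for every integer `k ≥ 2·log n` (log base 2), with
probability strictly greater than `1/2` some integer `1 ≤ t ≤ k` is attained
by exactly one of the variables. -/
theorem green_decay_finite (n : ℕ) (hn : 2 ≤ n)
    (Ω : Type*) [MeasurableSpace Ω] (μ : Measure Ω) [IsProbabilityMeasure μ]
    (G : Fin n → Ω → ℕ) (hmeas : ∀ i, Measurable (G i))
    (hind : iIndepFun G μ)
    (hgeom : ∀ (i : Fin n) (t : ℕ), 1 ≤ t →
      μ {ω | G i ω = t} = (2 : ENNReal)⁻¹ ^ t)
    (k : ℕ) (hk : 2 * Real.logb 2 n ≤ (k : ℝ)) :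
    1 / 2 < μ {ω | ∃ t : ℕ, 1 ≤ t ∧ t ≤ k ∧ ∃! i : Fin n, G i ω = t} := by
  have hn2 : (2 : ℝ) ≤ n := by exact_mod_cast hn
  have hpow : (n : ℝ) ^ 2 ≤ 2 ^ k := sq_le_two_pow_of_two_mul_logb_le (by positivity) hk
  have hk1 : 1 ≤ k := by
    by_contra! hk0
    rw [Nat.lt_one_iff.1 hk0] at hpow
    nlinarith
  have hfail : failWeight (univ : Finset (Fin n)) k < 1 / 2 := by
    rw [failWeight_eq_greenDecayFailProb, card_univ, Fintype.card_fin]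
    have hsmall : (n : ℝ) ^ 2 * 2⁻¹ ^ k ≤ 1 := by
      rwa [inv_pow, ← div_eq_mul_inv, div_le_one (by positivity)]
    linarith [greenDecayFailProb_le hn hk1]
  refine half_lt_measure_of_measure_compl_lt
    ((measure_not_hasSingletonLevel_le_failWeight hmeas hind hgeom k).trans_lt ?_)
  rw [show (1 / 2 : ENNReal) = ENNReal.ofReal (1 / 2) by
    rw [one_div, one_div, ENNReal.ofReal_inv_of_pos two_pos, ENNReal.ofReal_ofNat]]
  exact (ENNReal.ofReal_lt_ofReal_iff (by norm_num)).2 hfail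
end

section
/- Let n ≥ 4 be a natural number, φ a real number with 1 ≤ φ < log n / log log n, and ε a real number with 0 < ε ≤ 1. Set c = ⌈φ·(1 + log(2/ε)/log n)⌉. Then (1/(2·n^{1/φ}) + 2/n²)^{c} ≤ ε/(2n). (Inequality from the proof of Lemma 3 of the paper: the probability that all c phases executed by a station are unsuccessful, each phase failing with probability at most 1/(2·n^{1/φ}) + 2/n², is at most ε/(2n).) -/
/-- For `n ≥ 4`, `1 ≤ φ < log n / log log n` and `0 < ε ≤ 1`,
with `c = ⌈φ·(1 + log(2/ε)/log n)⌉`, one has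
`(1/(2·n^(1/φ)) + 2/n²)^c ≤ ε/(2n)` (logs base 2). -/
theorem all_phases_fail_bound (n : ℕ) (hn : 4 ≤ n) (φ : ℝ) (hφ1 : 1 ≤ φ)
    (hφ2 : φ < Real.logb 2 n / Real.logb 2 (Real.logb 2 n))
    (ε : ℝ) (hε0 : 0 < ε) (hε1 : ε ≤ 1) :
    (1 / (2 * (n : ℝ) ^ (1 / φ)) + 2 / (n : ℝ) ^ 2) ^
        ⌈φ * (1 + Real.logb 2 (2 / ε) / Real.logb 2 n)⌉₊ ≤
      ε / (2 * n) := by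
  set c := ⌈φ * (1 + Real.logb 2 (2 / ε) / Real.logb 2 n)⌉₊ with hc
  set A := (n : ℝ) ^ (1 / φ) with hA
  have hN4 : (4 : ℝ) ≤ n := by exact_mod_cast hn
  have hN0 : (0 : ℝ) < n := by linarith
  have hN1 : (1 : ℝ) < n := by linarith
  have hφ0 : (0 : ℝ) < φ := by linarith
  have hA0 : (0 : ℝ) < A := Real.rpow_pos_of_pos hN0 _
  have hA1 : (1 : ℝ) ≤ A := Real.one_le_rpow hN1.le (by positivity)
  have hAn : A ≤ (n : ℝ) := by
    calc A ≤ (n : ℝ) ^ (1 : ℝ) :=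
          Real.rpow_le_rpow_of_exponent_le hN1.le (by rw [div_le_one hφ0]; linarith)
      _ = n := Real.rpow_one _
  -- Step 1: bound the base by 1/A
  have hx : 1 / (2 * A) + 2 / (n : ℝ) ^ 2 ≤ 1 / A := by
    have h4A : 4 * A ≤ (n : ℝ) ^ 2 := by nlinarith
    have h1 : 2 / (n : ℝ) ^ 2 ≤ 1 / (2 * A) := by
      rw [div_le_div_iff₀ (by positivity) (by positivity)]
      nlinarith
    have h2 : 1 / (2 * A) + 1 / (2 * A) = 1 / A := by
      ring
    linarith
  have hx0 : 0 ≤ 1 / (2 * A) + 2 / (n : ℝ) ^ 2 := by positivity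
  have hpow : (1 / (2 * A) + 2 / (n : ℝ) ^ 2) ^ c ≤ (1 / A) ^ c :=
    pow_le_pow_left₀ hx0 hx c
  -- Step 2: A ^ c ≥ 2n/ε
  have hL : 0 < Real.logb 2 (n : ℝ) := Real.logb_pos one_lt_two hN1
  have hceil : φ * (1 + Real.logb 2 (2 / ε) / Real.logb 2 n) ≤ (c : ℝ) :=
    Nat.le_ceil _
  have hexp : 1 + Real.logb 2 (2 / ε) / Real.logb 2 n ≤ 1 / φ * c := by
    rw [one_div, inv_mul_eq_div, le_div_iff₀ hφ0]
    nlinarith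
  have hAc : 2 * (n : ℝ) / ε ≤ A ^ c := by
    have e1 : A ^ c = (n : ℝ) ^ (1 / φ * (c : ℝ)) := by
      rw [hA, ← Real.rpow_natCast ((n : ℝ) ^ (1 / φ)) c, ← Real.rpow_mul hN0.le]
    have e2 : (n : ℝ) ^ (1 + Real.logb 2 (2 / ε) / Real.logb 2 n)
        ≤ (n : ℝ) ^ (1 / φ * (c : ℝ)) :=
      Real.rpow_le_rpow_of_exponent_le hN1.le hexp
    have e3 : (n : ℝ) ^ (1 + Real.logb 2 (2 / ε) / Real.logb 2 n)
        = (n : ℝ) * (2 / ε) := by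
      rw [Real.rpow_add hN0, Real.rpow_one]
      congr 1
      have h2n : (2 : ℝ) ^ Real.logb 2 (n : ℝ) = n :=
        Real.rpow_logb two_pos (by norm_num) hN0
      nth_rewrite 1 [← h2n]
      rw [← Real.rpow_mul (by norm_num : (0:ℝ) ≤ 2), mul_div_assoc',
        mul_div_cancel_left₀ _ hL.ne']
      exact Real.rpow_logb two_pos (by norm_num) (by positivity)
    have e4 : (n : ℝ) * (2 / ε) ≤ (n : ℝ) ^ (1 / φ * (c : ℝ)) := e3 ▸ e2
    have h2d : 2 * (n : ℝ) / ε = (n : ℝ) * (2 / ε) := by ring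
    rw [e1, h2d]
    exact e4
  -- Step 3: conclude
  have hfin : (1 / A) ^ c ≤ ε / (2 * n) := by
    rw [one_div, inv_pow, inv_eq_one_div, div_le_div_iff₀ (by positivity) (by positivity)]
    have := (div_le_iff₀ hε0).mp hAc
    nlinarith
  exact le_trans hpow hfin
end
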